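/- arXiv:0812.2826 — 8 statements merged into one kernel-verified Lean document; each statement's English description precedes it below -/
import Mathlib

section
/- The number of partitions of n into distinct parts with exactly k chains equals the number of partitions of n into odd parts with exactly k different parts. -/
open Nat

/-- The parts of a partition listed in nonincreasing order. -/
def sortedParts {n : ℕ} (p : n.Partition) : List ℕ := (p.parts.sort (· ≤ ·)).reverse

/-- `lo p` is the number of odd parts of `p` (with multiplicity). -/
def lo {n : ℕ} (p : n.Partition) : ℕ := (p.parts.filter (fun i => i % 2 = 1)).card

/-- `la p` is the alternating sum `λ₁ - λ₂ + λ₃ - ⋯` of the partition `p`. -/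
def la {n : ℕ} (p : n.Partition) : ℤ :=
  ∑ i ∈ Finset.range (sortedParts p).length, (-1 : ℤ) ^ i * ((sortedParts p).getD i 0 : ℤ)

/-- `nd p` is the number of distinct part-values of `p`. -/
def nd {n : ℕ} (p : n.Partition) : ℕ := p.parts.toFinset.card

/-- `no p` is the number of distinct part-values of `p` occurring with odd multiplicity. -/
def no {n : ℕ} (p : n.Partition) : ℕ :=
  (p.parts.toFinset.filter (fun a => p.parts.count a % 2 = 1)).card

/-- `nc p` is the number of chains (maximal runs of consecutive integers) of a
partition with distinct parts: parts `i` such that `i+1` is not a part. -/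
def nc {n : ℕ} (p : n.Partition) : ℕ :=
  (p.parts.toFinset.filter (fun i => i + 1 ∉ p.parts)).card

/-- `r2 p` is the number of parts of `p` congruent to 2 mod 4. -/
def r2 {n : ℕ} (p : n.Partition) : ℕ := (p.parts.filter (fun i => i % 4 = 2)).card

/-- Only even parts may be repeated. -/
def onlyEvenRepeats {n : ℕ} (p : n.Partition) : Prop :=
  ∀ i, 1 < p.parts.count i → 2 ∣ i

/-- Successive parts differ by at most 4, strictly less than 4 if either part is even,
and the smallest part is less than 4 (the class 𝒜₁ of Chen–Gao–Ji–Li). -/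
def A1cond {n : ℕ} (p : n.Partition) : Prop :=
  onlyEvenRepeats p ∧
  (∀ j, j + 1 < (sortedParts p).length →
    (sortedParts p).getD j 0 ≤ (sortedParts p).getD (j + 1) 0 + 4 ∧
    ((2 ∣ (sortedParts p).getD j 0 ∨ 2 ∣ (sortedParts p).getD (j + 1) 0) →
      (sortedParts p).getD j 0 < (sortedParts p).getD (j + 1) 0 + 4)) ∧
  (sortedParts p).getD ((sortedParts p).length - 1) 0 < 4

/-- No part divisible by 4 and only even parts repeated (the class 𝒜₂). -/
def A2cond {n : ℕ} (p : n.Partition) : Prop :=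
  (∀ i ∈ p.parts, ¬ (4 ∣ i)) ∧ onlyEvenRepeats p

/-- `loConj p` is the number of odd parts of the conjugate partition of `p`. -/
def loConj {n : ℕ} (p : n.Partition) : ℕ :=
  ((Finset.Icc 1 n).filter (fun i => (p.parts.filter (fun j => i ≤ j)).card % 2 = 1)).card

/-!
Sylvester's bijection. Draw a partition into odd parts with each part `2μ + 1` as a row of cells
centred on a common column. Peel off two hooks: the centre column together with the right arm of
the top row, and the column just left of the centre together with the left arm of the top row.
Their sizes are the two largest parts of the image, and what is left is again such a centred
diagram, of the odd partition obtained by deleting the parts `1` and lowering every other part of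
the tail by `2`. The two hooks are consecutive integers exactly when the tail has no part `1`,
and the second hook is followed by its predecessor exactly when the top part is repeated. So each
step creates one chain for each part size that disappears in it (the top part unless repeated,
and `1`), and the chains of the image are counted by the distinct parts.

The map is injective, as it has an explicit left inverse, and by Euler's theorem there are as
many partitions into odd parts as into distinct parts, so it is a bijection respecting both
statistics.
-/

theorem Function.Injective.card_fiber_eq {α β γ : Type*} [Finite β] {f : α → β}
    (hf : f.Injective) (hcard : Nat.card β ≤ Nat.card α) {g : α → γ} {h : β → γ}
    (hfg : ∀ a, h (f a) = g a) (c : γ) :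
    Nat.card {a // g a = c} = Nat.card {b // h b = c} :=
  Nat.card_congr <| (Equiv.ofBijective f (hf.bijective_of_nat_card_le hcard)).subtypeEquiv
    fun a => by rw [Equiv.ofBijective_apply, hfg]

namespace Sylvester

lemma mem_iff_head?_eq {α : Type*} [PartialOrder α] {l : List α} (hl : l.Pairwise (· ≥ ·))
    {v : α} (hv : ∀ z ∈ l, z ≤ v) :
    v ∈ l ↔ l.head? = some v := by
  cases l with
  | nil => simp
  | cons b l =>
    simp only [List.mem_cons, List.head?_cons, Option.some.injEq]
    refine ⟨?_, fun h => .inl h.symm⟩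
    rintro (rfl | hvl)
    · rfl
    · exact le_antisymm (hv b List.mem_cons_self) (List.rel_of_pairwise_cons hl hvl)

def SortedOdd (l : List ℕ) : Prop := l.Pairwise (· ≥ ·) ∧ ∀ a ∈ l, a % 2 = 1

def shrink (t : List ℕ) : List ℕ := (t.filter (3 ≤ ·)).map (· - 2)

lemma length_shrink_le (t : List ℕ) : (shrink t).length ≤ t.length :=
  (List.length_map _).trans_le (List.length_filter_le _ _)

lemma mem_shrink {t : List ℕ} {z : ℕ} : z ∈ shrink t ↔ z + 2 ∈ t ∧ 1 ≤ z := by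
  simp only [shrink, List.mem_map, List.mem_filter, decide_eq_true_eq]
  constructor
  · rintro ⟨x, ⟨hx, h3⟩, rfl⟩
    exact ⟨by rwa [Nat.sub_add_cancel (by omega)], by omega⟩
  · rintro ⟨hz, h1⟩
    exact ⟨z + 2, ⟨hz, by omega⟩, rfl⟩

lemma map_add_two_shrink (t : List ℕ) : (shrink t).map (· + 2) = t.filter (3 ≤ ·) := by
  rw [shrink, List.map_map, List.map_congr_left fun x hx => ?_, List.map_id]
  have := (List.mem_filter.1 hx).2
  simp only [decide_eq_true_eq] at this
  simp only [Function.comp_apply, id_eq]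
  omega

lemma sortedOdd_shrink {t : List ℕ} (h : SortedOdd t) : SortedOdd (shrink t) :=
  ⟨(h.1.filter _).map _ fun _ _ hxy => Nat.sub_le_sub_right hxy 2, fun z hz => by
    have := h.2 _ (mem_shrink.1 hz).1
    omega⟩

namespace SortedOdd

variable {a : ℕ} {t : List ℕ}

lemma tail (h : SortedOdd (a :: t)) : SortedOdd t :=
  ⟨(List.pairwise_cons.1 h.1).2, fun x hx => h.2 x (List.mem_cons_of_mem a hx)⟩

lemma le_head (h : SortedOdd (a :: t)) {x : ℕ} (hx : x ∈ t) : x ≤ a :=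
  List.rel_of_pairwise_cons h.1 hx

lemma head_mod_two (h : SortedOdd (a :: t)) : a % 2 = 1 := h.2 a List.mem_cons_self

lemma eq_replicate_of_head_eq_one (h : SortedOdd (1 :: t)) : t = List.replicate t.length 1 :=
  List.eq_replicate_iff.2 ⟨rfl, fun b hb => by
    have := h.le_head hb
    have := h.tail.2 b hb
    omega⟩

lemma eq_filter_append (h : SortedOdd t) :
    t = t.filter (3 ≤ ·) ++ List.replicate (t.length - (t.filter (3 ≤ ·)).length) 1 := by
  induction t with
  | nil => rfl
  | cons x t ih =>
    by_cases hx : 3 ≤ x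
    · rw [List.filter_cons_of_pos (by simpa using hx)]
      simpa using ih h.tail
    · have hx1 : x = 1 := by have := h.head_mod_two; omega
      subst hx1
      rw [List.filter_eq_nil_iff.2 fun y hy => ?_]
      · simpa [List.replicate_succ] using h.eq_replicate_of_head_eq_one
      · have : y ≤ 1 := by
          rcases List.mem_cons.1 hy with rfl | hy
          exacts [le_rfl, h.le_head hy]
        simp only [decide_eq_true_eq]
        omega

lemma eq_map_shrink_append (h : SortedOdd t) :
    t = (shrink t).map (· + 2) ++ List.replicate (t.length - (shrink t).length) 1 := by
  rw [map_add_two_shrink, shrink, List.length_map]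
  exact h.eq_filter_append

lemma sum_eq (h : SortedOdd t) : t.sum = (shrink t).sum + (shrink t).length + t.length := by
  conv_lhs => rw [h.eq_map_shrink_append]
  have := length_shrink_le t
  simp only [List.sum_append, List.sum_map_add, List.map_id_fun', id_eq, List.map_const',
    List.sum_replicate, smul_eq_mul, mul_one]
  omega

lemma one_mem_iff (h : SortedOdd t) : 1 ∈ t ↔ (shrink t).length < t.length := by
  conv_lhs => rw [h.eq_map_shrink_append]
  simp only [List.mem_append, List.mem_map, Nat.reduceEqDiff, and_false, exists_const,
    List.mem_replicate, ne_eq, and_true, false_or]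
  omega

lemma card_toFinset_eq (h : SortedOdd t) :
    t.toFinset.card = (shrink t).toFinset.card + if 1 ∈ t then 1 else 0 := by
  have hmap : ((shrink t).map (· + 2)).toFinset.card = (shrink t).toFinset.card := by
    rw [List.card_toFinset, List.dedup_map_of_injective (add_left_injective 2), List.length_map,
      List.card_toFinset]
  have hone : 1 ∉ (shrink t).map (· + 2) := by simp
  have hlen := length_shrink_le t
  conv_lhs => rw [h.eq_map_shrink_append]
  rw [List.toFinset_append]
  by_cases h1 : 1 ∈ t
  · rw [if_pos h1, List.toFinset_replicate_of_ne_zero (by rw [h.one_mem_iff] at h1; omega),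
      Finset.card_union_of_disjoint (by simp [hone]), hmap, Finset.card_singleton]
  · rw [if_neg h1, show t.length - (shrink t).length = 0 by rw [h.one_mem_iff] at h1; omega,
      List.replicate_zero, List.toFinset_nil, Finset.union_empty, hmap, add_zero]

lemma mem_iff_head?_shrink (h : SortedOdd (a :: t)) (ha : 3 ≤ a) :
    a ∈ t ↔ (shrink t).head? = some (a - 2) := by
  rw [← mem_iff_head?_eq (sortedOdd_shrink h.tail).1 fun z hz => ?_, mem_shrink,
    Nat.sub_add_cancel (by omega)]
  · exact (and_iff_left (by omega)).symm
  · have := h.le_head (mem_shrink.1 hz).1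
    omega

end SortedOdd

def chainCount (l : List ℕ) : ℕ := (l.toFinset.filter (fun i => i + 1 ∉ l)).card

lemma chainCount_cons {x : ℕ} {l : List ℕ} (h : (x :: l).Pairwise (· > ·)) :
    chainCount (x :: l) = chainCount l + if l.head? = some (x - 1) then 0 else 1 := by
  have hlt : ∀ y ∈ l, y < x := fun y hy => List.rel_of_pairwise_cons h hy
  have hfilter : (x :: l).toFinset.filter (fun i => i + 1 ∉ x :: l) =
      insert x ((l.toFinset.filter (fun i => i + 1 ∉ l)).erase (x - 1)) := by
    ext i
    simp only [Finset.mem_filter, Finset.mem_insert, Finset.mem_erase, List.mem_toFinset,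
      List.mem_cons]
    constructor
    · rintro ⟨rfl | hi, hi'⟩
      · exact .inl rfl
      · have := hlt i hi
        exact .inr ⟨by omega, hi, fun h => hi' (.inr h)⟩
    · rintro (rfl | ⟨hi, hil, hi'⟩)
      · exact ⟨.inl rfl, by rintro (h | h) <;> [omega; exact absurd (hlt _ h) (by omega)]⟩
      · have := hlt i hil
        exact ⟨.inr hil, by rintro (h | h) <;> [omega; exact hi' h]⟩
  have hx : x ∉ (l.toFinset.filter (fun i => i + 1 ∉ l)).erase (x - 1) := fun hx =>
    (hlt x (List.mem_toFinset.1 (Finset.mem_filter.1 (Finset.mem_of_mem_erase hx)).1)).false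
  have hmem : x - 1 ∈ l.toFinset.filter (fun i => i + 1 ∉ l) ↔ l.head? = some (x - 1) := by
    rw [Finset.mem_filter, List.mem_toFinset, ← mem_iff_head?_eq
      ((List.pairwise_cons.1 h).2.imp le_of_lt) fun z hz => Nat.le_sub_one_of_lt (hlt z hz)]
    refine ⟨And.left, fun hl => ⟨hl, fun hx => ?_⟩⟩
    have := hlt _ hl
    exact (hlt x (by rwa [Nat.sub_add_cancel (by omega)] at hx)).false
  rw [chainCount, hfilter, Finset.card_insert_of_notMem hx, Finset.card_erase_eq_ite]
  by_cases hl : l.head? = some (x - 1)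
  · have := Finset.card_pos.2 ⟨_, hmem.2 hl⟩
    rw [if_pos (hmem.2 hl), if_pos hl, chainCount]
    omega
  · rw [if_neg (mt hmem.1 hl), if_neg hl, chainCount]

/-- The two new parts are the hooks peeled off at the top row; when the top part is `1` the
diagram is a single column, which is one hook. -/
def sylvester : List ℕ → List ℕ
  | [] => []
  | a :: t =>
    if a = 1 then [t.length + 1]
    else ((a + 1) / 2 + t.length) :: ((a - 1) / 2 + (shrink t).length) :: sylvester (shrink t)
termination_by l => l.length
decreasing_by exact Nat.lt_succ_of_le (length_shrink_le t)

/-- Reads `a` off `y = (a - 1) / 2 + (shrink t).length`, where `shrink t` is the image of the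
recursive call, and the number of parts `1` off `x - y - 1`. -/
def sylvesterInv : List ℕ → List ℕ
  | [] => []
  | [x] => List.replicate x 1
  | x :: y :: r =>
    (2 * (y - (sylvesterInv r).length) + 1) ::
      ((sylvesterInv r).map (· + 2) ++ List.replicate (x - y - 1) 1)

lemma sylvester_one (t : List ℕ) : sylvester (1 :: t) = [t.length + 1] := by
  rw [sylvester, if_pos rfl]

lemma sylvester_of_ne_one {a : ℕ} (t : List ℕ) (ha : a ≠ 1) : sylvester (a :: t) =
    ((a + 1) / 2 + t.length) :: ((a - 1) / 2 + (shrink t).length) :: sylvester (shrink t) := by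
  rw [sylvester, if_neg ha]

lemma head?_sylvester (l : List ℕ) :
    (sylvester l).head? = l.head?.map fun c => (c + 1) / 2 + (l.length - 1) := by
  match l with
  | [] => simp [sylvester]
  | a :: t =>
    by_cases ha : a = 1
    · subst ha
      simp [sylvester_one, add_comm]
    · simp [sylvester_of_ne_one t ha]

lemma sum_sylvester {l : List ℕ} (h : SortedOdd l) : (sylvester l).sum = l.sum := by
  induction l using sylvester.induct with
  | case1 => simp [sylvester]
  | case2 t =>
    rw [sylvester_one, h.eq_replicate_of_head_eq_one]
    simp [List.sum_replicate, add_comm]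
  | case3 a t ha ih =>
    have := h.head_mod_two
    have := h.tail.sum_eq
    rw [sylvester_of_ne_one t ha, List.sum_cons, List.sum_cons, ih (sortedOdd_shrink h.tail),
      List.sum_cons]
    omega

lemma pos_of_mem_sylvester {l : List ℕ} (h : SortedOdd l) : ∀ z ∈ sylvester l, 0 < z := by
  induction l using sylvester.induct with
  | case1 => simp [sylvester]
  | case2 t => simp [sylvester_one]
  | case3 a t ha ih =>
    have := h.head_mod_two
    rw [sylvester_of_ne_one t ha]
    rintro z (_ | ⟨_, _ | ⟨_, hz⟩⟩)
    · omega
    · omega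
    · exact ih (sortedOdd_shrink h.tail) z hz

lemma pairwise_sylvester {l : List ℕ} (h : SortedOdd l) : (sylvester l).Pairwise (· > ·) := by
  induction l using sylvester.induct with
  | case1 => simp [sylvester]
  | case2 t => simp [sylvester_one]
  | case3 a t ha ih =>
    have := h.head_mod_two
    have := length_shrink_le t
    rw [sylvester_of_ne_one t ha, ← List.isChain_iff_pairwise, List.isChain_cons_cons,
      List.isChain_cons, List.isChain_iff_pairwise, head?_sylvester]
    refine ⟨by omega, fun y hy => ?_, ih (sortedOdd_shrink h.tail)⟩
    obtain ⟨c, hc, rfl⟩ := Option.mem_map.1 hy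
    have hcmem := List.mem_of_mem_head? hc
    have := h.le_head (mem_shrink.1 hcmem).1
    have := List.length_pos_of_mem hcmem
    omega

lemma chainCount_sylvester {l : List ℕ} (h : SortedOdd l) :
    chainCount (sylvester l) = l.toFinset.card := by
  induction l using sylvester.induct with
  | case1 => simp [sylvester, chainCount]
  | case2 t =>
    rw [sylvester_one]
    conv_rhs => rw [h.eq_replicate_of_head_eq_one, ← List.replicate_succ,
      List.toFinset_replicate_of_ne_zero (Nat.succ_ne_zero _)]
    simp [chainCount, Finset.filter_singleton]
  | case3 a t ha ih =>
    have ha3 : 3 ≤ a := by have := h.head_mod_two; omega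
    have hpw := pairwise_sylvester h
    rw [sylvester_of_ne_one t ha] at hpw ⊢
    have hyR : (sylvester (shrink t)).head? = some ((a - 1) / 2 + (shrink t).length - 1) ↔
        a ∈ t := by
      rw [h.mem_iff_head?_shrink ha3, head?_sylvester]
      cases hs : shrink t with
      | nil => simp
      | cons c u =>
        have := h.head_mod_two
        have := (sortedOdd_shrink h.tail).2 c (hs ▸ List.mem_cons_self)
        simp only [Option.map_some, List.head?_cons, Option.some.injEq, List.length_cons]
        omega
    have hxy : (a - 1) / 2 + (shrink t).length = (a + 1) / 2 + t.length - 1 ↔ 1 ∉ t := by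
      rw [h.tail.one_mem_iff]
      have := length_shrink_le t
      omega
    rw [chainCount_cons hpw, chainCount_cons (List.pairwise_cons.1 hpw).2,
      ih (sortedOdd_shrink h.tail), List.toFinset_cons, Finset.card_insert_eq_ite,
      h.tail.card_toFinset_eq]
    simp only [List.mem_toFinset, List.head?_cons, Option.some.injEq, hxy, hyR]
    split_ifs <;> omega

lemma sylvesterInv_sylvester {l : List ℕ} (h : SortedOdd l) : sylvesterInv (sylvester l) = l := by
  induction l using sylvester.induct with
  | case1 => simp [sylvester, sylvesterInv]
  | case2 t =>
    rw [sylvester_one, sylvesterInv, List.replicate_succ, ← h.eq_replicate_of_head_eq_one]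
  | case3 a t ha ih =>
    have := h.head_mod_two
    have := length_shrink_le t
    rw [sylvester_of_ne_one t ha, sylvesterInv, ih (sortedOdd_shrink h.tail),
      show 2 * ((a - 1) / 2 + (shrink t).length - (shrink t).length) + 1 = a by omega,
      show (a + 1) / 2 + t.length - ((a - 1) / 2 + (shrink t).length) - 1 =
        t.length - (shrink t).length by omega]
    exact congrArg _ h.tail.eq_map_shrink_append.symm

lemma card_odd_eq_card_nodup (n : ℕ) :
    Nat.card {p : n.Partition // ∀ i ∈ p.parts, Odd i} =
      Nat.card {p : n.Partition // p.parts.Nodup} := by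
  rw [Nat.card_eq_fintype_card, Nat.card_eq_fintype_card, Fintype.card_subtype,
    Fintype.card_subtype]
  simpa [Nat.Partition.odds, Nat.Partition.restricted, Nat.Partition.distincts,
    Nat.not_even_iff_odd] using Nat.Partition.card_odds_eq_card_distincts n

section Partition

variable {n : ℕ}

lemma sortedOdd_sort {p : n.Partition} (hp : ∀ i ∈ p.parts, Odd i) :
    SortedOdd (p.parts.sort (· ≥ ·)) :=
  ⟨Multiset.pairwise_sort _ _, fun a ha => Nat.odd_iff.1 (hp a (by simpa using ha))⟩

def sylvesterPartition (p : {p : n.Partition // ∀ i ∈ p.parts, Odd i}) :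
    {q : n.Partition // q.parts.Nodup} :=
  ⟨{ parts := (sylvester (p.1.parts.sort (· ≥ ·)) : Multiset ℕ)
     parts_pos := fun hi => pos_of_mem_sylvester (sortedOdd_sort p.2) _ hi
     parts_sum := by
       rw [Multiset.sum_coe, sum_sylvester (sortedOdd_sort p.2), ← Multiset.sum_coe,
         Multiset.sort_eq, p.1.parts_sum] },
    Multiset.coe_nodup.2 ((pairwise_sylvester (sortedOdd_sort p.2)).imp ne_of_gt)⟩

lemma sylvesterInv_sort_sylvesterPartition (p : {p : n.Partition // ∀ i ∈ p.parts, Odd i}) :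
    sylvesterInv ((sylvesterPartition p).1.parts.sort (· ≥ ·)) =
      p.1.parts.sort (· ≥ ·) := by
  have hpw := pairwise_sylvester (sortedOdd_sort p.2)
  rw [sylvesterPartition, Multiset.coe_sort, List.mergeSort_eq_self _ (hpw.imp le_of_lt),
    sylvesterInv_sylvester (sortedOdd_sort p.2)]

lemma sylvesterPartition_injective : Function.Injective (sylvesterPartition (n := n)) := by
  intro p p' hpp'
  apply Subtype.ext
  apply Nat.Partition.ext
  rw [← Multiset.sort_eq p.1.parts (· ≥ ·), ← Multiset.sort_eq p'.1.parts (· ≥ ·),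
    ← sylvesterInv_sort_sylvesterPartition, hpp', sylvesterInv_sort_sylvesterPartition]

lemma nc_sylvesterPartition (p : {p : n.Partition // ∀ i ∈ p.parts, Odd i}) :
    nc (sylvesterPartition p).1 = nd p.1 := by
  rw [nd, ← Multiset.sort_eq p.1.parts (· ≥ ·), List.toFinset_coe,
    ← chainCount_sylvester (sortedOdd_sort p.2)]
  rfl

end Partition

end Sylvester

theorem sylvester_refinement (n k : ℕ) :
    Nat.card {p : n.Partition // p.parts.Nodup ∧ nc p = k} =
      Nat.card {p : n.Partition // (∀ i ∈ p.parts, Odd i) ∧ nd p = k} := by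
  rw [← Nat.card_congr (Equiv.subtypeSubtypeEquivSubtypeInter _ (nc · = k)),
    ← Nat.card_congr (Equiv.subtypeSubtypeEquivSubtypeInter _ (nd · = k))]
  exact (Sylvester.sylvesterPartition_injective.card_fiber_eq
    (Sylvester.card_odd_eq_card_nodup n).ge Sylvester.nc_sylvesterPartition k).symm
end

section
/- The number of partitions of n into distinct parts with largest part k equals the number of partitions of n into odd parts such that the largest part plus twice the number of parts equals 2k+1. -/
open Nat

/-!
We compare generating functions in `ℤ⟦X⟧`. Removing the largest part `m + 1` of a partition into
distinct parts leaves one into distinct parts at most `m`, counted by `distinctSeries m`, and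
`distinctSeries (m + 1) = (1 + X ^ (m + 1)) * distinctSeries m`. An odd partition on the right
with `b + 1` parts has largest part `2a + 1` with `a + b = m`; removing it leaves `b` odd parts at
most `2a + 1`, counted by `oddSeries (2a + 1) b`. Splitting on whether `1` is a part (if not,
subtract `2` from every part), or on whether the bound is a part, gives two Pascal-type
recurrences for `oddSeries`. Together they give the symmetry
`X ^ a * oddSeries (2a + 1) b = X ^ b * oddSeries (2b + 1) a` (conjugation of the underlying
partitions in an `a × b` box), and then `∑_{a + b = m} X ^ (2a) * oddSeries (2a + 1) b`
satisfies the recurrence of `X ^ m * distinctSeries m`.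
-/

open PowerSeries Finset

noncomputable def partitionSeries (Q : Multiset ℕ → Prop) : ℤ⟦X⟧ :=
  mk fun n => (Nat.card {p : n.Partition // Q p.parts} : ℤ)

@[simp]
lemma coeff_partitionSeries (Q : Multiset ℕ → Prop) (n : ℕ) :
    coeff n (partitionSeries Q) = Nat.card {p : n.Partition // Q p.parts} :=
  coeff_mk _ _

lemma partitionSeries_and_add_and_not (Q R : Multiset ℕ → Prop) :
    partitionSeries (fun s => Q s ∧ R s) + partitionSeries (fun s => Q s ∧ ¬R s) =
      partitionSeries Q := by
  classical
  ext n
  simp only [map_add, coeff_partitionSeries, Nat.card_eq_fintype_card, Fintype.card_subtype]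
  rw [← Finset.filter_filter, ← Finset.filter_filter]
  exact_mod_cast Finset.card_filter_add_card_filter_not _

lemma partitionSeries_eq_one {Q : Multiset ℕ → Prop}
    (hQ : ∀ s : Multiset ℕ, (∀ x ∈ s, 0 < x) → (Q s ↔ s = 0)) : partitionSeries Q = 1 := by
  ext n
  rw [coeff_partitionSeries, coeff_one]
  split_ifs with hn
  · subst hn
    have : Unique {p : (0 : ℕ).Partition // Q p.parts} :=
      (Equiv.subtypeUnivEquiv fun p => (hQ _ fun _ hx => p.parts_pos hx).2
        (Nat.Partition.partition_zero_parts p)).unique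
    exact_mod_cast Nat.card_unique
  · have : IsEmpty {p : n.Partition // Q p.parts} := ⟨fun ⟨p, hp⟩ => hn <| by
      rw [← p.parts_sum, (hQ _ fun _ hx => p.parts_pos hx).1 hp, Multiset.sum_zero]⟩
    simp

lemma partitionSeries_eq_X_pow_mul {a : ℕ} (ha : 0 < a) {P R : Multiset ℕ → Prop}
    (hP : ∀ s, P s → a ∈ s) (hPR : ∀ t, P (a ::ₘ t) ↔ R t) :
    partitionSeries P = X ^ a * partitionSeries R := by
  ext n
  rw [coeff_X_pow_mul', coeff_partitionSeries]
  split_ifs with han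
  · rw [coeff_partitionSeries, Nat.cast_inj]
    refine Nat.card_congr <| (Equiv.subtypeSubtypeEquivSubtype fun hp => hP _ hp).symm.trans <|
      (Nat.Partition.partitionWithPartEquiv ha han).subtypeEquiv fun p => ?_
    simp [← hPR, Multiset.cons_erase p.2]
  · have : IsEmpty {p : n.Partition // P p.parts} :=
      ⟨fun ⟨_, hp⟩ => han (Nat.Partition.le_of_mem_parts (hP _ hp))⟩
    simp

lemma Multiset.sum_map_sub_add_mul_card {c : ℕ} {s : Multiset ℕ} (hs : ∀ x ∈ s, c ≤ x) :
    (s.map (· - c)).sum + c * Multiset.card s = s.sum := by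
  conv_rhs =>
    rw [← Multiset.map_id' s, ← Multiset.map_congr rfl fun x hx => Nat.sub_add_cancel (hs x hx)]
  simp [Multiset.sum_map_add, mul_comm]

def partitionMapSubEquiv (n c e : ℕ) (Q : Multiset ℕ → Prop) :
    {p : (n + c * e).Partition //
        Multiset.card p.parts = e ∧ (∀ x ∈ p.parts, c < x) ∧ Q (p.parts.map (· - c))} ≃
      {q : n.Partition // Multiset.card q.parts = e ∧ Q q.parts} where
  toFun p :=
    ⟨⟨p.1.parts.map (· - c), by simpa using p.2.2.1, by
      have := Multiset.sum_map_sub_add_mul_card fun x hx => (p.2.2.1 x hx).le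
      rw [p.1.parts_sum, p.2.1] at this
      omega⟩, by simpa using p.2.1, p.2.2.2⟩
  invFun q :=
    ⟨⟨q.1.parts.map (· + c), by simpa using fun x hx => Or.inl (q.1.parts_pos hx), by
      simp [Multiset.sum_map_add, q.1.parts_sum, q.2.1, mul_comm]⟩,
      by simpa using q.2.1, by simpa using fun x hx => q.1.parts_pos hx,
      by simpa [Multiset.map_map, Function.comp_def] using q.2.2⟩
  left_inv p := by
    refine Subtype.ext <| Nat.Partition.ext ?_
    simp only [Multiset.map_map, Function.comp_def]
    conv_rhs => rw [← Multiset.map_id' p.1.parts]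
    exact Multiset.map_congr rfl fun x hx => Nat.sub_add_cancel (p.2.2.1 x hx).le
  right_inv q := by
    refine Subtype.ext <| Nat.Partition.ext ?_
    simp [Multiset.map_map]

lemma partitionSeries_map_sub (c e : ℕ) (Q : Multiset ℕ → Prop) :
    partitionSeries (fun s => Multiset.card s = e ∧ (∀ x ∈ s, c < x) ∧ Q (s.map (· - c))) =
      X ^ (c * e) * partitionSeries (fun t => Multiset.card t = e ∧ Q t) := by
  ext n
  rw [coeff_X_pow_mul', coeff_partitionSeries]
  split_ifs with hn
  · obtain ⟨m, rfl⟩ := Nat.exists_eq_add_of_le' hn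
    rw [coeff_partitionSeries, Nat.add_sub_cancel, Nat.card_congr (partitionMapSubEquiv m c e Q)]
  · have : IsEmpty {p : n.Partition //
        Multiset.card p.parts = e ∧ (∀ x ∈ p.parts, c < x) ∧ Q (p.parts.map (· - c))} :=
      ⟨fun ⟨p, hcard, hgt, _⟩ => hn <| by
        have := Multiset.card_nsmul_le_sum fun x hx => (hgt x hx).le
        rw [p.parts_sum, hcard, smul_eq_mul] at this
        linarith⟩
    simp

lemma partitionSeries_eq_sum_fiber {ι : Type*} [DecidableEq ι] (Q : Multiset ℕ → Prop)
    (f : Multiset ℕ → ι) (t : Finset ι) (hf : ∀ s, Q s → f s ∈ t) :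
    partitionSeries Q = ∑ i ∈ t, partitionSeries fun s => Q s ∧ f s = i := by
  classical
  ext n
  simp only [map_sum, coeff_partitionSeries, Nat.card_eq_fintype_card, Fintype.card_subtype]
  rw [Finset.card_eq_sum_card_fiberwise (f := fun p : n.Partition => f p.parts) (t := t)
    fun p hp => hf _ (Finset.mem_filter.1 hp).2]
  simp [Finset.filter_filter]

lemma Multiset.sup_mem_of_ne_zero {α : Type*} [LinearOrder α] [OrderBot α] {s : Multiset α}
    (hs : s ≠ 0) : s.sup ∈ s := by
  induction s using Multiset.induction with
  | empty => exact absurd rfl hs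
  | cons a t ih =>
    rw [Multiset.sup_cons]
    rcases eq_or_ne t 0 with rfl | ht
    · simp
    rcases max_choice a t.sup with h | h <;> rw [h]
    · exact Multiset.mem_cons_self a t
    · exact Multiset.mem_cons_of_mem (ih ht)

lemma Multiset.sup_eq_iff {α : Type*} [LinearOrder α] [OrderBot α] {s : Multiset α} {a : α}
    (ha : a ≠ ⊥) : s.sup = a ↔ a ∈ s ∧ ∀ x ∈ s, x ≤ a := by
  refine ⟨fun h => ⟨h ▸ Multiset.sup_mem_of_ne_zero ?_, Multiset.sup_le.1 h.le⟩,
    fun ⟨hmem, hle⟩ => le_antisymm (Multiset.sup_le.2 hle) (Multiset.le_sup hmem)⟩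
  rintro rfl
  exact ha (by simpa using h.symm)

noncomputable def oddSeries (B b : ℕ) : ℤ⟦X⟧ :=
  partitionSeries fun s => Multiset.card s = b ∧ ∀ x ∈ s, Odd x ∧ x ≤ B

lemma oddSeries_zero_right (B : ℕ) : oddSeries B 0 = 1 :=
  partitionSeries_eq_one fun s _ => by
    simp only [Multiset.card_eq_zero, and_iff_left_iff_imp]
    rintro rfl
    simp

lemma oddSeries_zero_succ (b : ℕ) : oddSeries 0 (b + 1) = 0 := by
  ext n
  have : IsEmpty {p : n.Partition //
      Multiset.card p.parts = b + 1 ∧ ∀ x ∈ p.parts, Odd x ∧ x ≤ 0} :=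
    ⟨fun ⟨p, hcard, hodd⟩ => by
      obtain ⟨x, hx⟩ := Multiset.card_pos_iff_exists_mem.1 (by omega : 0 < Multiset.card p.parts)
      obtain ⟨hx, hx0⟩ := hodd x hx
      exact Nat.not_even_iff_odd.2 hx (by simp [Nat.le_zero.1 hx0])⟩
  simp only [oddSeries, coeff_partitionSeries, map_zero, Nat.card_of_isEmpty, Nat.cast_zero]

lemma oddSeries_succ (B b : ℕ) (hB : 1 ≤ B) :
    oddSeries B (b + 1) = X * oddSeries B b + X ^ (2 * (b + 1)) * oddSeries (B - 2) (b + 1) := by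
  rw [oddSeries, ← partitionSeries_and_add_and_not _ (1 ∈ ·)]
  congr 1
  · rw [← pow_one X]
    refine partitionSeries_eq_X_pow_mul one_pos (fun _ h => h.2) fun t => ?_
    simp [hB]
  · rw [oddSeries, ← partitionSeries_map_sub]
    congr
    ext s
    have key : ∀ x, (Odd x ∧ x ≤ B) ∧ x ≠ 1 ↔ 2 < x ∧ Odd (x - 2) ∧ x - 2 ≤ B - 2 := by
      intro x
      rw [Nat.odd_iff, Nat.odd_iff]
      omega
    simp only [Multiset.forall_mem_map_iff]
    grind

lemma oddSeries_add_two_succ {B : ℕ} (hB : Odd B) (b : ℕ) :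
    oddSeries (B + 2) (b + 1) = oddSeries B (b + 1) + X ^ (B + 2) * oddSeries (B + 2) b := by
  rw [oddSeries, ← partitionSeries_and_add_and_not _ (B + 2 ∈ ·), add_comm]
  congr 1
  · congr
    ext s
    have key : ∀ x, (Odd x ∧ x ≤ B + 2) ∧ x ≠ B + 2 ↔ Odd x ∧ x ≤ B := by
      intro x
      rw [Nat.odd_iff] at hB ⊢
      omega
    grind
  · refine partitionSeries_eq_X_pow_mul (by omega) (fun _ h => h.2) fun t => ?_
    simp [hB.add_even even_two]

lemma oddSeries_one (b : ℕ) : oddSeries 1 b = X ^ b := by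
  induction b with
  | zero => exact oddSeries_zero_right 1
  | succ b ih =>
    rw [oddSeries_succ 1 b le_rfl, ih, show 1 - 2 = 0 from rfl, oddSeries_zero_succ]
    ring

lemma X_pow_mul_oddSeries_comm (a b : ℕ) :
    X ^ a * oddSeries (2 * a + 1) b = X ^ b * oddSeries (2 * b + 1) a := by
  induction a generalizing b with
  | zero => simp [oddSeries_one, oddSeries_zero_right]
  | succ a ih =>
    induction b with
    | zero => simp [oddSeries_one, oddSeries_zero_right]
    | succ b ihb =>
      have hA := oddSeries_add_two_succ (odd_two_mul_add_one a) b
      have hB := oddSeries_succ (2 * b + 1 + 2) a (by omega)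
      rw [Nat.add_sub_cancel] at hB
      rw [show 2 * (a + 1) + 1 = 2 * a + 1 + 2 by ring] at ihb ⊢
      have ih' := ih (b + 1)
      rw [show 2 * (b + 1) + 1 = 2 * b + 1 + 2 by ring] at ih' ⊢
      linear_combination X ^ (a + 1) * hA - X ^ (b + 1) * hB + X * ih' +
        X ^ (2 * a + 3) * ihb

noncomputable def distinctSeries (m : ℕ) : ℤ⟦X⟧ :=
  partitionSeries fun s => s.Nodup ∧ ∀ x ∈ s, x ≤ m

lemma distinctSeries_zero : distinctSeries 0 = 1 :=
  partitionSeries_eq_one fun s hs => by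
    refine ⟨fun h => Multiset.eq_zero_of_forall_notMem fun x hx => ?_, ?_⟩
    · have := hs x hx; have := h.2 x hx; omega
    · rintro rfl; simp

lemma distinctSeries_succ (m : ℕ) :
    distinctSeries (m + 1) = (1 + X ^ (m + 1)) * distinctSeries m := by
  rw [distinctSeries, ← partitionSeries_and_add_and_not _ (m + 1 ∈ ·), add_mul, one_mul,
    add_comm (distinctSeries m)]
  congr 1
  · refine partitionSeries_eq_X_pow_mul (by omega) (fun _ h => h.2) fun t => ?_
    simp only [Multiset.nodup_cons, Multiset.mem_cons, forall_eq_or_imp, le_refl, true_and,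
      true_or, and_true]
    grind
  · congr
    ext s
    grind

lemma one_add_sum_antidiagonal_oddSeries (m : ℕ) :
    1 + ∑ p ∈ antidiagonal m, oddSeries (2 * p.1 - 1) (p.2 + 1) =
      ∑ p ∈ antidiagonal m, oddSeries (2 * p.1 + 1) p.2 := by
  -- at `p.1 = 0` the bound `2 * p.1 - 1` truncates to `0`, and `oddSeries 0 (b + 1) = 0`
  have h := (Nat.sum_antidiagonal_succ' (f := fun p => oddSeries (2 * p.1 - 1) p.2)).symm.trans
    (Nat.sum_antidiagonal_succ (n := m))
  simpa [oddSeries_zero_right, oddSeries_zero_succ, mul_add] using h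

lemma X_pow_mul_sum_antidiagonal_oddSeries (m : ℕ) :
    X ^ m * ∑ p ∈ antidiagonal m, oddSeries (2 * p.1 + 1) p.2 =
      ∑ p ∈ antidiagonal m, X ^ (2 * p.1) * oddSeries (2 * p.1 + 1) p.2 := by
  rw [mul_sum, ← Nat.sum_antidiagonal_swap]
  refine sum_congr rfl fun p hp => ?_
  rw [← mem_antidiagonal.1 hp, Prod.fst_swap, Prod.snd_swap, pow_add, mul_assoc,
    ← X_pow_mul_oddSeries_comm, ← mul_assoc, ← pow_add, two_mul]

lemma sum_antidiagonal_X_pow_mul_oddSeries (m : ℕ) :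
    ∑ p ∈ antidiagonal m, X ^ (2 * p.1) * oddSeries (2 * p.1 + 1) p.2 =
      X ^ m * distinctSeries m := by
  induction m with
  | zero => simp [oddSeries_zero_right, distinctSeries_zero]
  | succ m ih =>
    have hterm : ∀ p ∈ antidiagonal m, X ^ (2 * p.1) * oddSeries (2 * p.1 + 1) (p.2 + 1) =
        X * (X ^ (2 * p.1) * oddSeries (2 * p.1 + 1) p.2) +
          X ^ (2 * (m + 1)) * oddSeries (2 * p.1 - 1) (p.2 + 1) := by
      intro p hp
      rw [oddSeries_succ _ _ (by omega), show 2 * p.1 + 1 - 2 = 2 * p.1 - 1 by omega,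
        ← mem_antidiagonal.1 hp]
      ring
    calc _ = X * ∑ p ∈ antidiagonal m, X ^ (2 * p.1) * oddSeries (2 * p.1 + 1) p.2 +
          X ^ (2 * (m + 1)) * (1 + ∑ p ∈ antidiagonal m, oddSeries (2 * p.1 - 1) (p.2 + 1)) := by
          rw [Nat.sum_antidiagonal_succ', sum_congr rfl hterm, sum_add_distrib, ← mul_sum,
            ← mul_sum, oddSeries_zero_right]
          ring
      _ = X ^ (m + 1) * distinctSeries (m + 1) := by
          rw [one_add_sum_antidiagonal_oddSeries, show 2 * (m + 1) = (m + 2) + m by ring, pow_add,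
            mul_assoc, X_pow_mul_sum_antidiagonal_oddSeries, ih, distinctSeries_succ]
          ring

lemma partitionSeries_nodup_sup_eq (m : ℕ) :
    partitionSeries (fun s => s.Nodup ∧ s.sup = m + 1) = X ^ (m + 1) * distinctSeries m := by
  have hsup (s : Multiset ℕ) := Multiset.sup_eq_iff (s := s) (a := m + 1) (by simp)
  refine partitionSeries_eq_X_pow_mul (by omega) (fun s h => ((hsup s).1 h.2).1) fun t => ?_
  simp only [hsup, Multiset.nodup_cons, Multiset.mem_cons, forall_eq_or_imp, le_refl, true_and,
    true_or]
  grind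

lemma odd_sup_add_two_mul_card_iff {s : Multiset ℕ} {m a b : ℕ} (hab : a + b = m) :
    ((∀ i ∈ s, Odd i) ∧ s.sup + 2 * Multiset.card s = 2 * (m + 1) + 1) ∧
        (s.sup / 2, Multiset.card s - 1) = (a, b) ↔
      (Multiset.card s = b + 1 ∧ ∀ x ∈ s, Odd x ∧ x ≤ 2 * a + 1) ∧ 2 * a + 1 ∈ s := by
  rw [Prod.mk.injEq]
  constructor
  · rintro ⟨⟨hodd, hstat⟩, hsup, hcard⟩
    have hs : s ≠ 0 := by rintro rfl; simp at hstat
    have hmem := Multiset.sup_mem_of_ne_zero hs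
    have hsup' : s.sup = 2 * a + 1 := by have := Nat.odd_iff.1 (hodd _ hmem); omega
    exact ⟨⟨by omega, fun x hx => ⟨hodd x hx, hsup' ▸ Multiset.le_sup hx⟩⟩, hsup' ▸ hmem⟩
  · rintro ⟨⟨hcard, hx⟩, hmem⟩
    have hsup : s.sup = 2 * a + 1 :=
      (Multiset.sup_eq_iff (by simp)).2 ⟨hmem, fun x h => (hx x h).2⟩
    exact ⟨⟨fun x h => (hx x h).1, by omega⟩, by omega, by omega⟩

lemma sup_div_two_card_sub_one_mem_antidiagonal {s : Multiset ℕ} {m : ℕ}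
    (h : (∀ i ∈ s, Odd i) ∧ s.sup + 2 * Multiset.card s = 2 * (m + 1) + 1) :
    (s.sup / 2, Multiset.card s - 1) ∈ antidiagonal m := by
  obtain ⟨hodd, hstat⟩ := h
  have hs : s ≠ 0 := by rintro rfl; simp at hstat
  have := Nat.odd_iff.1 (hodd _ (Multiset.sup_mem_of_ne_zero hs))
  have := Multiset.card_pos.2 hs
  exact mem_antidiagonal.2 (by omega)

lemma partitionSeries_odd_sup_add_two_mul_card_eq (m : ℕ) :
    partitionSeries (fun s => (∀ i ∈ s, Odd i) ∧ s.sup + 2 * Multiset.card s = 2 * (m + 1) + 1) =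
      ∑ p ∈ antidiagonal m, X ^ (2 * p.1 + 1) * oddSeries (2 * p.1 + 1) p.2 := by
  rw [partitionSeries_eq_sum_fiber _ _ _ fun s => sup_div_two_card_sub_one_mem_antidiagonal]
  refine sum_congr rfl fun p hp => ?_
  simp_rw [odd_sup_add_two_mul_card_iff (mem_antidiagonal.1 hp)]
  refine partitionSeries_eq_X_pow_mul (by omega) (fun _ h => h.2) fun t => ?_
  simp [Multiset.mem_cons]

lemma partitionSeries_nodup_sup_eq_odd (m : ℕ) :
    partitionSeries (fun s => s.Nodup ∧ s.sup = m + 1) =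
      partitionSeries fun s =>
        (∀ i ∈ s, Odd i) ∧ s.sup + 2 * Multiset.card s = 2 * (m + 1) + 1 := by
  rw [partitionSeries_nodup_sup_eq, partitionSeries_odd_sup_add_two_mul_card_eq,
    _root_.pow_succ', mul_assoc, ← sum_antidiagonal_X_pow_mul_oddSeries, mul_sum]
  exact sum_congr rfl fun _ _ => by ring

theorem fine_refinement (n k : ℕ) (hn : 0 < n) :
    Nat.card {p : n.Partition // p.parts.Nodup ∧ p.parts.sup = k} =
      Nat.card {p : n.Partition // (∀ i ∈ p.parts, Odd i) ∧
        p.parts.sup + 2 * p.parts.card = 2 * k + 1} := by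
  rcases k with _ | m
  · have hD : IsEmpty {p : n.Partition // p.parts.Nodup ∧ p.parts.sup = 0} :=
      ⟨fun ⟨p, _, hsup⟩ => by
        obtain ⟨x, hx⟩ := Multiset.exists_mem_of_ne_zero (s := p.parts) fun h => by
          have := p.parts_sum
          simp [h] at this
          omega
        have := Multiset.sup_le.1 hsup.le x hx
        have := p.parts_pos hx
        omega⟩
    have hO : IsEmpty {p : n.Partition // (∀ i ∈ p.parts, Odd i) ∧
        p.parts.sup + 2 * p.parts.card = 2 * 0 + 1} :=
      ⟨fun ⟨p, _, hstat⟩ => by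
        have : p.parts = 0 := Multiset.card_eq_zero.1 (by omega)
        simp [this] at hstat⟩
    simp only [Nat.card_of_isEmpty]
  · exact_mod_cast by simpa using congrArg (coeff n) (partitionSeries_nodup_sup_eq_odd m)
end

section
/- The number of partitions of n into distinct parts with k odd parts equals the number of partitions of n into odd parts such that exactly k different parts occur with odd multiplicity. -/
open Nat

/-!
Glaisher's bijection sends a partition into odd parts in which `m` occurs `c` times to the
partition with the distinct parts `2 ^ j * m`, `j` running over the binary digits of `c`. Such a
part is odd exactly when `j = 0`, i.e. when `c` is odd, so the bijection carries `no` to `lo`.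
Splitting every part `2 ^ j * m` back into `2 ^ j` copies of `m` undoes it, so it is injective,
and it is onto the partitions into distinct parts because, by Euler's theorem, there are as many
of those as partitions into odd parts.
-/

namespace Glaisher

open Multiset

lemma ordCompl_two_pow_mul {m : ℕ} (hm : Odd m) (j : ℕ) : ordCompl[2] (2 ^ j * m) = m :=
  Nat.ordCompl_pow_mul_of_not_dvd j Nat.prime_two hm.not_two_dvd_nat

lemma ordProj_two_pow_mul {m : ℕ} (hm : Odd m) (j : ℕ) : ordProj[2] (2 ^ j * m) = 2 ^ j := by
  have h := Nat.ordProj_mul_ordCompl_eq_self (2 ^ j * m) 2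
  rw [ordCompl_two_pow_mul hm] at h
  exact Nat.eq_of_mul_eq_mul_right hm.pos h

lemma two_pow_mul_inj_of_odd {j j' m m' : ℕ} (hm : Odd m) (hm' : Odd m') :
    2 ^ j * m = 2 ^ j' * m' ↔ j = j' ∧ m = m' := by
  refine ⟨fun h => ?_, by rintro ⟨rfl, rfl⟩; rfl⟩
  obtain rfl : m = m' := by rw [← ordCompl_two_pow_mul hm j, h, ordCompl_two_pow_mul hm']
  exact ⟨Nat.pow_right_injective le_rfl (Nat.eq_of_mul_eq_mul_right hm.pos h), rfl⟩

def split (s : Multiset ℕ) : Multiset ℕ :=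
  s.bind fun i => replicate (ordProj[2] i) (ordCompl[2] i)

def merge (t : Multiset ℕ) : Multiset ℕ :=
  t.toFinset.val.bind fun m => ((t.count m).bitIndices.map (2 ^ · * m) : Multiset ℕ)

lemma mem_merge {t : Multiset ℕ} {i : ℕ} :
    i ∈ merge t ↔ ∃ m ∈ t, ∃ j, (t.count m).testBit j ∧ 2 ^ j * m = i := by
  simp [merge]

lemma sum_merge (t : Multiset ℕ) : (merge t).sum = t.sum := by
  rw [merge, sum_bind, Finset.sum_multiset_count t]
  refine congrArg sum (map_congr rfl fun m _ => ?_)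
  rw [Multiset.sum_coe, List.sum_map_mul_right, Nat.sum_map_two_pow_bitIndices, smul_eq_mul]

lemma split_map_bitIndices {m : ℕ} (hm : Odd m) (c : ℕ) :
    split (c.bitIndices.map (2 ^ · * m) : Multiset ℕ) = replicate c m := by
  rw [eq_replicate]
  constructor
  · simp only [split, card_bind, Multiset.map_coe, Multiset.sum_coe, List.map_map,
      Function.comp_def, card_replicate, ordProj_two_pow_mul hm, Nat.sum_map_two_pow_bitIndices]
  · simp only [split, mem_bind, Multiset.mem_coe, List.mem_map]
    rintro _ ⟨_, ⟨j, -, rfl⟩, hb⟩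
    rw [eq_of_mem_replicate hb, ordCompl_two_pow_mul hm]

lemma split_merge {t : Multiset ℕ} (ht : ∀ m ∈ t, Odd m) : split (merge t) = t := by
  rw [merge, split, bind_assoc]
  calc t.toFinset.val.bind (fun m => split _)
      = ∑ m ∈ t.toFinset, t.count m • {m} := congrArg sum (map_congr rfl fun m hm => by
        rw [split_map_bitIndices (ht m (mem_toFinset.mp hm)), nsmul_singleton])
    _ = t := toFinset_sum_count_nsmul_eq t

lemma nodup_merge {t : Multiset ℕ} (ht : ∀ m ∈ t, Odd m) : (merge t).Nodup := by
  refine nodup_bind.mpr ⟨fun m hm => ?_, t.toFinset.nodup.pairwise fun m hm m' hm' hne => ?_⟩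
  · have hodd := ht m (mem_toFinset.mp hm)
    exact coe_nodup.mpr
      (Nat.bitIndices_nodup.map fun j j' h => ((two_pow_mul_inj_of_odd hodd hodd).mp h).1)
  · simp only [Function.onFun, disjoint_left, Multiset.mem_coe, List.mem_map]
    rintro _ ⟨j, -, rfl⟩ ⟨j', -, h⟩
    exact hne ((two_pow_mul_inj_of_odd (ht m' (mem_toFinset.mp hm'))
      (ht m (mem_toFinset.mp hm))).mp h).2.symm

lemma filter_odd_merge {t : Multiset ℕ} (ht : ∀ m ∈ t, Odd m) :
    (merge t).filter Odd = (t.toFinset.filter fun m => Odd (t.count m)).val := by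
  refine (((nodup_merge ht).filter _).ext (Finset.nodup _)).mpr fun i => ?_
  simp only [mem_filter, mem_merge, Finset.mem_val, Finset.mem_filter, mem_toFinset]
  constructor
  · rintro ⟨⟨m, hm, j, hj, rfl⟩, hodd⟩
    obtain rfl : j = 0 := by
      by_contra hj
      exact Nat.not_even_iff_odd.mpr (Nat.odd_mul.mp hodd).1 (Nat.even_pow.mpr ⟨even_two, hj⟩)
    rw [pow_zero, one_mul]
    exact ⟨hm, by simpa [Nat.odd_iff] using hj⟩
  · rintro ⟨hi, hodd⟩
    refine ⟨⟨i, hi, 0, by simpa [Nat.odd_iff] using hodd, ?_⟩, ht i hi⟩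
    rw [pow_zero, one_mul]

section Partition

variable {n : ℕ}

def mergePartition (q : n.Partition) : n.Partition where
  parts := merge q.parts
  parts_pos hi := by
    obtain ⟨m, hm, j, -, rfl⟩ := mem_merge.mp hi
    exact Nat.mul_pos (Nat.two_pow_pos j) (q.parts_pos hm)
  parts_sum := by rw [sum_merge, q.parts_sum]

lemma lo_mergePartition {q : n.Partition} (hq : ∀ i ∈ q.parts, Odd i) :
    lo (mergePartition q) = no q := by
  simp only [lo, no, mergePartition, ← Nat.odd_iff]
  rw [filter_odd_merge hq, Finset.card_val]

lemma mergePartition_injOn :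
    Set.InjOn mergePartition {q : n.Partition | ∀ i ∈ q.parts, Odd i} :=
  fun q hq q' hq' h => Nat.Partition.ext <| by
    rw [← split_merge hq, ← split_merge hq']
    exact congrArg (split ·.parts) h

lemma exists_mergePartition_eq {p : n.Partition} (hp : p.parts.Nodup) :
    ∃ q : n.Partition, (∀ i ∈ q.parts, Odd i) ∧ mergePartition q = p := by
  have hodds {q : n.Partition} : q ∈ Partition.odds n ↔ ∀ i ∈ q.parts, Odd i := by
    simp [Partition.odds, Partition.restricted]
  obtain ⟨q, hq, rfl⟩ := Finset.surjOn_of_injOn_of_card_le mergePartition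
    (fun q hq => Finset.mem_filter.mpr ⟨Finset.mem_univ _, nodup_merge (hodds.mp hq)⟩)
    (mergePartition_injOn.mono fun _ => hodds.mp)
    (Partition.card_odds_eq_card_distincts n).ge
    (Finset.mem_filter.mpr ⟨Finset.mem_univ p, hp⟩)
  exact ⟨q, hodds.mp hq, rfl⟩

end Partition

end Glaisher

theorem glaisher_refinement (n k : ℕ) :
    Nat.card {p : n.Partition // p.parts.Nodup ∧ lo p = k} =
      Nat.card {p : n.Partition // (∀ i ∈ p.parts, Odd i) ∧ no p = k} := by
  symm
  refine Nat.card_eq_of_bijective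
    (fun q => ⟨Glaisher.mergePartition q.1, Glaisher.nodup_merge q.2.1,
      (Glaisher.lo_mergePartition q.2.1).trans q.2.2⟩)
    ⟨fun q q' h => Subtype.ext (Glaisher.mergePartition_injOn q.2.1 q'.2.1 (congrArg (·.1) h)),
      fun ⟨p, hp, hlo⟩ => ?_⟩
  obtain ⟨q, hq, rfl⟩ := Glaisher.exists_mergePartition_eq hp
  exact ⟨⟨q, hq, (Glaisher.lo_mergePartition hq).symm.trans hlo⟩, rfl⟩
end

section
/- There is a bijection between partitions of n into distinct parts and partitions of n in which only even parts may repeat, successive parts differ by at most 4 (strictly less than 4 if either part is even), and the smallest part is less than 4; under this bijection a partition λ with distinct parts maps to α with l_o(λ) = l_o(α) and l_a(λ) = 2·r_2(α) + l_o(α). -/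
open Nat

/-!
Write `c m` for the number of parts `≥ m`, i.e. the conjugate partition. The image of `λ` has
parts `a i = c (2i-1) + c (2i)`, the column sums of the 2-modular diagram of `λ`. When no odd part
repeats, `c (2i) = ⌊a i / 2⌋` and `c (2i-1) = ⌈a i / 2⌉`; so the map conjugates the sequences
`c (2i)` and `c (2i-1)` separately, hence is an involution. Distinct parts mean `c m ≤ c (m+1) + 1`,
which is exactly what makes consecutive `a i` differ by at most 4 (less when one is even) and the
last one less than 4. Conversely, `a (i+1) = a (i+2) > 0` forces successive parts
`λ_j ≥ 2i+4 > 2i ≥ λ_(j+1)`, or a smallest part `≥ 4`. Finally `l_a(λ)` counts the odd `c m`, and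
`c (2i-1) % 2 + c (2i) % 2 = 2 [a i ≡ 2 mod 4] + [a i odd]`.
-/

open Finset

namespace Nat

/-- For antitone `u`, `conjSeq n u` is the conjugate of the sequence `u 1 ≥ ⋯ ≥ u n`. -/
def conjSeq (n : ℕ) (u : ℕ → ℕ) (k : ℕ) : ℕ := #{i ∈ Icc 1 n | k ≤ u i}

theorem card_filter_Icc_le {n c : ℕ} (h : c ≤ n) : #{i ∈ Icc 1 n | i ≤ c} = c := by
  rw [show {i ∈ Icc 1 n | i ≤ c} = Icc 1 c by ext; simp only [mem_filter, mem_Icc]; omega, Nat.card_Icc, Nat.add_sub_cancel]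

theorem conjSeq_congr {n : ℕ} {u v : ℕ → ℕ} (h : ∀ i ∈ Icc 1 n, u i = v i) :
    conjSeq n u = conjSeq n v :=
  funext fun _ => congrArg card (filter_congr fun i hi => by rw [h i hi])

theorem le_conjSeq_iff {n m : ℕ} {u : ℕ → ℕ} (hu : Antitone u) (k : ℕ) (hm : 1 ≤ m)
    (hmn : m ≤ n) : m ≤ conjSeq n u k ↔ k ≤ u m := by
  constructor
  · intro h
    by_contra! hk
    have hsub : {i ∈ Icc 1 n | k ≤ u i} ⊆ Icc 1 (m - 1) := fun i hi => by
      simp only [mem_filter, mem_Icc] at hi ⊢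
      have : ¬ m ≤ i := fun hmi => (hu hmi).not_gt (hk.trans_le hi.2)
      omega
    have := card_le_card hsub
    rw [Nat.card_Icc] at this
    exact absurd (h.trans this) (by omega)
  · intro h
    calc m = #(Icc 1 m) := by simp
      _ ≤ conjSeq n u k := card_le_card fun i hi => by
        simp only [mem_filter, mem_Icc] at hi ⊢
        exact ⟨⟨hi.1, hi.2.trans hmn⟩, h.trans (hu hi.2)⟩

theorem conjSeq_conjSeq {n m : ℕ} {u : ℕ → ℕ} (hu : Antitone u) (hm : 1 ≤ m) (hmn : m ≤ n)
    (hun : u m ≤ n) : conjSeq n (conjSeq n u) m = u m := by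
  rw [conjSeq, filter_congr fun i _ => le_conjSeq_iff hu i hm hmn, card_filter_Icc_le hun]

theorem sum_Icc_eq_sum_Icc_pairs {M : Type*} [AddCommMonoid M] (f : ℕ → M) {n : ℕ}
    (hf : ∀ m, n < m → f m = 0) :
    ∑ m ∈ Icc 1 n, f m = ∑ i ∈ Icc 1 n, (f (2 * i - 1) + f (2 * i)) := by
  have pairs : ∀ k, ∑ m ∈ Icc 1 (2 * k), f m = ∑ i ∈ Icc 1 k, (f (2 * i - 1) + f (2 * i)) := by
    intro k
    induction k with
    | zero => simp
    | succ k ih =>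
      rw [show 2 * (k + 1) = 2 * k + 1 + 1 by ring, sum_Icc_succ_top (by omega),
        sum_Icc_succ_top (by omega), sum_Icc_succ_top (by omega), ih, add_assoc,
        show 2 * (k + 1) - 1 = 2 * k + 1 by omega]
      rfl
  rw [← pairs, ← sum_subset (Icc_subset_Icc_right (by omega : n ≤ 2 * n))]
  intro m hm hmn
  simp only [mem_Icc] at hm hmn
  exact hf m (by omega)

theorem sum_range_neg_one_pow (c : ℕ) : ∑ j ∈ range c, (-1 : ℤ) ^ j = (c % 2 : ℕ) := by
  induction c with
  | zero => simp
  | succ c ih =>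
    rw [sum_range_succ, ih]
    rcases Nat.mod_two_eq_zero_or_one c with hc | hc
    · rw [(Nat.even_iff.2 hc).neg_one_pow, hc, show (c + 1) % 2 = 1 by omega]; norm_num
    · rw [(Nat.odd_iff.2 hc).neg_one_pow, hc, show (c + 1) % 2 = 0 by omega]; norm_num

end Nat

theorem List.le_getD_iff_lt_length_filter {l : List ℕ} (hl : l.Pairwise (· ≥ ·)) {m : ℕ}
    (hm : 0 < m) (j : ℕ) : m ≤ l.getD j 0 ↔ j < (l.filter (m ≤ ·)).length := by
  induction l generalizing j with
  | nil => simp only [List.getD_nil, List.filter_nil, List.length_nil]; omega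
  | cons x t ih =>
    obtain ⟨hxt, ht⟩ := List.pairwise_cons.1 hl
    by_cases hx : m ≤ x
    · cases j with
      | zero => simp [hx]
      | succ j => rw [List.getD_cons_succ, ih ht]; simp [hx]
    · have htnil : t.filter (m ≤ ·) = [] := List.filter_eq_nil_iff.2 fun a ha h =>
        hx ((of_decide_eq_true h).trans (hxt a ha))
      cases j with
      | zero => simp [hx, htnil]
      | succ j => rw [List.getD_cons_succ, ih ht]; simp [hx, htnil]

namespace Nat.Partition

variable {n : ℕ} (p : n.Partition)

/-- The `m`-th part of the conjugate of `p`. -/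
def countGE (m : ℕ) : ℕ := (p.parts.filter (m ≤ ·)).card

theorem mem_Icc_of_mem_parts {a : ℕ} (ha : a ∈ p.parts) : a ∈ Icc 1 n :=
  mem_Icc.2 ⟨p.parts_pos ha, p.le_of_mem_parts ha⟩

theorem card_filter_parts (q : ℕ → Prop) [DecidablePred q] :
    (p.parts.filter q).card = ∑ a ∈ Icc 1 n, if q a then p.parts.count a else 0 := by
  rw [← Multiset.sum_count_eq_card fun a ha => p.mem_Icc_of_mem_parts (Multiset.mem_filter.1 ha).1]
  simp only [Multiset.count_filter]

theorem countGE_antitone : Antitone p.countGE := fun _ _ h =>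
  Multiset.card_le_card (Multiset.monotone_filter_right _ fun _ hj => h.trans hj)

theorem countGE_eq_zero {m : ℕ} (h : n < m) : p.countGE m = 0 :=
  Multiset.card_eq_zero.2 <| Multiset.filter_eq_nil.2 fun j hj hm =>
    absurd (hm.trans (p.le_of_mem_parts hj)) (by omega)

theorem countGE_eq_countGE_succ_add_count (m : ℕ) :
    p.countGE m = p.countGE (m + 1) + p.parts.count m := by
  have hdisj : p.parts.filter (fun a => m + 1 ≤ a ∧ m = a) = 0 :=
    Multiset.filter_eq_nil.2 fun _ _ => by omega
  rw [countGE, countGE, Multiset.count_eq_card_filter_eq, ← Multiset.card_add,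
    Multiset.filter_add_filter, hdisj, add_zero]
  exact congrArg _ (Multiset.filter_congr fun _ _ => by omega)

theorem countGE_le_card (m : ℕ) : p.countGE m ≤ p.parts.card :=
  Multiset.card_le_card (Multiset.filter_le _ _)

theorem card_parts_le : p.parts.card ≤ n := by
  simpa [p.parts_sum] using
    Multiset.card_nsmul_le_sum (s := p.parts) (a := 1) fun _ hx => p.parts_pos hx

theorem sum_countGE : ∑ m ∈ Icc 1 n, p.countGE m = n := by
  simp only [countGE, card_filter_parts]
  rw [sum_comm]
  conv_rhs => rw [← p.parts_sum, Finset.sum_multiset_count_of_subset p.parts (Icc 1 n)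
    fun a ha => p.mem_Icc_of_mem_parts (Multiset.mem_toFinset.1 ha)]
  refine sum_congr rfl fun a ha => ?_
  rw [← sum_filter, sum_const, card_filter_Icc_le (mem_Icc.1 ha).2, smul_eq_mul, smul_eq_mul,
    mul_comm]

theorem ext_of_countGE {q : n.Partition} (h : ∀ m, 1 ≤ m → p.countGE m = q.countGE m) : p = q := by
  refine Nat.Partition.ext (Multiset.ext.2 fun a => ?_)
  rcases Nat.eq_zero_or_pos a with rfl | ha
  · rw [Multiset.count_eq_zero_of_notMem fun h => (p.parts_pos h).ne rfl,
      Multiset.count_eq_zero_of_notMem fun h => (q.parts_pos h).ne rfl]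
  · have := p.countGE_eq_countGE_succ_add_count a
    have := q.countGE_eq_countGE_succ_add_count a
    have := h a ha
    have := h (a + 1) (by omega)
    omega

theorem coe_sortedParts : (sortedParts p : Multiset ℕ) = p.parts := by
  rw [sortedParts, Multiset.coe_reverse, Multiset.sort_eq]

theorem pairwise_sortedParts : (sortedParts p).Pairwise (· ≥ ·) :=
  List.pairwise_reverse.2 (Multiset.pairwise_sort p.parts (· ≤ ·))

theorem length_sortedParts : (sortedParts p).length = p.parts.card := by
  rw [← Multiset.coe_card, coe_sortedParts]

theorem le_getD_sortedParts_iff {m : ℕ} (hm : 0 < m) (j : ℕ) :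
    m ≤ (sortedParts p).getD j 0 ↔ j < p.countGE m := by
  rw [List.le_getD_iff_lt_length_filter p.pairwise_sortedParts hm, countGE, ← coe_sortedParts,
    Multiset.filter_coe, Multiset.coe_card]

theorem getD_sortedParts (j : ℕ) :
    (sortedParts p).getD j 0 = #{m ∈ Icc 1 n | j < p.countGE m} := by
  have hle : (sortedParts p).getD j 0 ≤ n := by
    by_contra! h
    have := (p.le_getD_sortedParts_iff (n.succ_pos) j).1 h
    rw [p.countGE_eq_zero n.lt_succ_self] at this
    omega
  conv_lhs => rw [← card_filter_Icc_le hle]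
  exact congrArg _ (filter_congr fun m hm => p.le_getD_sortedParts_iff (mem_Icc.1 hm).1 j)

theorem la_eq_sum_countGE_mod_two : la p = ((∑ m ∈ Icc 1 n, p.countGE m % 2 : ℕ) : ℤ) := by
  have hrange :
      ∀ m, {j ∈ range (sortedParts p).length | j < p.countGE m} = range (p.countGE m) := by
    intro m
    have := p.countGE_le_card m
    ext j
    simp only [mem_filter, mem_range, p.length_sortedParts]
    omega
  simp only [la, getD_sortedParts, natCast_card_filter, mul_sum, mul_boole]
  rw [sum_comm, Nat.cast_sum]
  refine sum_congr rfl fun m _ => ?_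
  rw [← sum_filter, hrange, sum_range_neg_one_pow]

theorem count_parts_eq_zero {m : ℕ} (h : n < m) : p.parts.count m = 0 :=
  Multiset.count_eq_zero_of_notMem fun hm => absurd (p.le_of_mem_parts hm) (by omega)

theorem lo_eq_sum_count_odd : lo p = ∑ i ∈ Icc 1 n, p.parts.count (2 * i - 1) := by
  rw [lo, card_filter_parts,
    sum_Icc_eq_sum_Icc_pairs _ fun m hm => by simp [p.count_parts_eq_zero hm]]
  refine sum_congr rfl fun i hi => ?_
  have := (mem_Icc.1 hi).1
  rw [if_pos (by omega), if_neg (by omega), add_zero]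

/-- The `i`-th column sum of the 2-modular diagram of `p`, in which a part `λ` is drawn as a row
of `⌊λ / 2⌋` cells filled with 2, followed by a cell filled with 1 when `λ` is odd. -/
def twoModularConjPart (i : ℕ) : ℕ := p.countGE (2 * i - 1) + p.countGE (2 * i)

theorem twoModularConjPart_antitone : Antitone p.twoModularConjPart := fun _ _ h =>
  add_le_add (p.countGE_antitone (by omega)) (p.countGE_antitone (by omega))

theorem twoModularConjPart_eq {i : ℕ} (hi : 0 < i) :
    p.twoModularConjPart i = 2 * p.countGE (2 * i) + p.parts.count (2 * i - 1) := by
  have := p.countGE_eq_countGE_succ_add_count (2 * i - 1)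
  rw [Nat.sub_add_cancel (by omega)] at this
  rw [twoModularConjPart]
  omega

theorem twoModularConjPart_succ (i : ℕ) :
    p.twoModularConjPart (i + 1) = p.countGE (2 * i + 1) + p.countGE (2 * i + 2) := by
  rw [twoModularConjPart, show 2 * (i + 1) - 1 = 2 * i + 1 by omega, mul_add_one]

theorem twoModularConjPart_add_two (i : ℕ) :
    p.twoModularConjPart (i + 2) = p.countGE (2 * i + 3) + p.countGE (2 * i + 4) := by
  rw [twoModularConjPart_succ, mul_add_one]

theorem sum_twoModularConjPart : ∑ i ∈ Icc 1 n, p.twoModularConjPart i = n :=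
  (sum_Icc_eq_sum_Icc_pairs _ fun _ hm => p.countGE_eq_zero hm).symm.trans p.sum_countGE

def twoModularConj : n.Partition :=
  ofSums n ((Icc 1 n).val.map p.twoModularConjPart) p.sum_twoModularConjPart

theorem twoModularConj_parts :
    p.twoModularConj.parts = ((Icc 1 n).val.map p.twoModularConjPart).filter (· ≠ 0) :=
  rfl

theorem card_filter_parts_twoModularConj (q : ℕ → Prop) [DecidablePred q] (hq : ¬ q 0) :
    (p.twoModularConj.parts.filter q).card = #{i ∈ Icc 1 n | q (p.twoModularConjPart i)} := by
  have hne : ∀ a, q a → a ≠ 0 := fun a h h0 => hq (h0 ▸ h)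
  rw [twoModularConj_parts, Multiset.filter_filter,
    Multiset.filter_congr fun a _ => and_iff_left_of_imp (hne a), Multiset.filter_map,
    Multiset.card_map]
  rfl

theorem countGE_twoModularConj {m : ℕ} (hm : 0 < m) :
    p.twoModularConj.countGE m = conjSeq n p.twoModularConjPart m :=
  p.card_filter_parts_twoModularConj _ (by omega)

theorem lo_twoModularConj_eq_card :
    lo p.twoModularConj = #{i ∈ Icc 1 n | p.twoModularConjPart i % 2 = 1} :=
  p.card_filter_parts_twoModularConj _ (by omega)

theorem r2_twoModularConj_eq_card :
    r2 p.twoModularConj = #{i ∈ Icc 1 n | p.twoModularConjPart i % 4 = 2} :=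
  p.card_filter_parts_twoModularConj _ (by omega)

theorem getD_sortedParts_twoModularConj {j : ℕ} (hj : j < n) :
    (sortedParts p.twoModularConj).getD j 0 = p.twoModularConjPart (j + 1) := by
  refine eq_of_forall_le_iff fun m => ?_
  rcases m.eq_zero_or_pos with rfl | hm
  · simp
  rw [le_getD_sortedParts_iff _ hm, countGE_twoModularConj _ hm, Nat.lt_iff_add_one_le,
    le_conjSeq_iff p.twoModularConjPart_antitone m (by omega) hj]

theorem length_sortedParts_twoModularConj_le : (sortedParts p.twoModularConj).length ≤ n :=
  p.twoModularConj.length_sortedParts ▸ p.twoModularConj.card_parts_le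

theorem exists_lt_of_one_lt_count_twoModularConj {v : ℕ}
    (hv : 1 < p.twoModularConj.parts.count v) :
    ∃ i i', 0 < i ∧ i < i' ∧ p.twoModularConjPart i = v ∧ p.twoModularConjPart i' = v := by
  have hv0 : v ≠ 0 := by
    rintro rfl
    rw [Multiset.count_eq_zero_of_notMem fun h => (p.twoModularConj.parts_pos h).ne rfl] at hv
    omega
  rw [Multiset.count_eq_card_filter_eq, p.card_filter_parts_twoModularConj _ hv0] at hv
  obtain ⟨a, ha, b, hb, hab⟩ := one_lt_card.1 hv
  simp only [mem_filter, mem_Icc] at ha hb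
  rcases lt_or_gt_of_ne hab with h | h
  · exact ⟨a, b, ha.1.1, h, ha.2.symm, hb.2.symm⟩
  · exact ⟨b, a, hb.1.1, h, hb.2.symm, ha.2.symm⟩

theorem onlyEvenRepeats_of_nodup (hp : p.parts.Nodup) : onlyEvenRepeats p := fun i hi =>
  absurd (Multiset.nodup_iff_count_le_one.1 hp i) (by omega)

theorem count_le_one_of_onlyEvenRepeats (h : onlyEvenRepeats p) {m : ℕ} (hm : m % 2 = 1) :
    p.parts.count m ≤ 1 := by
  by_contra! hc
  have := h m hc
  omega

theorem countGE_two_mul_sub {p : n.Partition} (h : onlyEvenRepeats p) {i r : ℕ} (hi : 0 < i)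
    (hr : r ≤ 1) :
    p.countGE (2 * i - r) = (p.twoModularConjPart i + r) / 2 := by
  have hrec := p.countGE_eq_countGE_succ_add_count (2 * i - 1)
  rw [Nat.sub_add_cancel (by omega)] at hrec
  have := count_le_one_of_onlyEvenRepeats p h (m := 2 * i - 1) (by omega)
  rw [twoModularConjPart]
  interval_cases r
  · rw [Nat.sub_zero]; omega
  · omega

theorem onlyEvenRepeats_twoModularConj {p : n.Partition} (h : onlyEvenRepeats p) :
    onlyEvenRepeats p.twoModularConj := by
  intro v hv
  obtain ⟨i, i', hi, hii', rfl, hi'⟩ := p.exists_lt_of_one_lt_count_twoModularConj hv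
  have heven := countGE_two_mul_sub h hi (r := 0) zero_le_one
  have hodd := countGE_two_mul_sub h (i := i') (by omega) le_rfl
  have := p.countGE_antitone (show 2 * i - 0 ≤ 2 * i' - 1 by omega)
  omega

theorem countGE_twoModularConj_two_mul_sub {p : n.Partition} (h : onlyEvenRepeats p) {k r : ℕ}
    (hk : 0 < k) (hr : r ≤ 1) :
    p.twoModularConj.countGE (2 * k - r) = conjSeq n (fun i => p.countGE (2 * i - r)) k := by
  rw [countGE_twoModularConj _ (by omega)]
  refine congrArg _ (filter_congr fun i hi => ?_)
  dsimp only
  rw [countGE_two_mul_sub h (mem_Icc.1 hi).1 hr]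
  omega

theorem twoModularConj_twoModularConj {p : n.Partition} (h : onlyEvenRepeats p) :
    p.twoModularConj.twoModularConj = p := by
  refine ext_of_countGE _ fun m hm => ?_
  obtain ⟨k, r, hk, hr, rfl⟩ : ∃ k r, 0 < k ∧ r ≤ 1 ∧ m = 2 * k - r :=
    ⟨(m + 1) / 2, m % 2, by omega, by omega, by omega⟩
  rcases le_or_gt k n with hkn | hkn
  · have hanti : Antitone fun i => p.countGE (2 * i - r) := fun _ _ hij =>
      p.countGE_antitone (by omega)
    rw [countGE_twoModularConj_two_mul_sub (onlyEvenRepeats_twoModularConj h) hk hr,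
      conjSeq_congr fun i hi => countGE_twoModularConj_two_mul_sub h (mem_Icc.1 hi).1 hr,
      conjSeq_conjSeq hanti hk hkn ((p.countGE_le_card _).trans p.card_parts_le)]
  · rw [countGE_eq_zero _ (by omega), countGE_eq_zero _ (by omega)]

theorem lo_twoModularConj {p : n.Partition} (h : onlyEvenRepeats p) :
    lo p.twoModularConj = lo p := by
  rw [lo_twoModularConj_eq_card, lo_eq_sum_count_odd, card_filter]
  refine sum_congr rfl fun i hi => ?_
  have hi := (mem_Icc.1 hi).1
  have := count_le_one_of_onlyEvenRepeats p h (m := 2 * i - 1) (by omega)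
  rw [twoModularConjPart_eq _ hi]
  split_ifs <;> omega

theorem sum_countGE_mod_two {p : n.Partition} (h : onlyEvenRepeats p) :
    ∑ m ∈ Icc 1 n, p.countGE m % 2 = 2 * r2 p.twoModularConj + lo p.twoModularConj := by
  rw [sum_Icc_eq_sum_Icc_pairs _ fun m hm => by simp [p.countGE_eq_zero hm],
    r2_twoModularConj_eq_card, lo_twoModularConj_eq_card, card_filter, card_filter, mul_sum,
    ← sum_add_distrib]
  refine sum_congr rfl fun i hi => ?_
  have hodd := countGE_two_mul_sub h (mem_Icc.1 hi).1 (r := 1) le_rfl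
  have heven := countGE_two_mul_sub h (mem_Icc.1 hi).1 (r := 0) zero_le_one
  rw [Nat.sub_zero] at heven
  split_ifs <;> omega

theorem la_eq_two_mul_r2_add_lo {p : n.Partition} (h : onlyEvenRepeats p) :
    la p = 2 * (r2 p.twoModularConj : ℤ) + (lo p.twoModularConj : ℤ) := by
  rw [la_eq_sum_countGE_mod_two, sum_countGE_mod_two h]
  push_cast
  rfl

theorem twoModularConjPart_succ_le_add_four (hp : p.parts.Nodup) (i : ℕ) :
    p.twoModularConjPart (i + 1) ≤ p.twoModularConjPart (i + 2) + 4 ∧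
      (2 ∣ p.twoModularConjPart (i + 1) ∨ 2 ∣ p.twoModularConjPart (i + 2) →
        p.twoModularConjPart (i + 1) < p.twoModularConjPart (i + 2) + 4) := by
  have hc := Multiset.nodup_iff_count_le_one.1 hp
  have h1 : p.countGE (2 * i + 1) = p.countGE (2 * i + 2) + p.parts.count (2 * i + 1) :=
    p.countGE_eq_countGE_succ_add_count _
  have h2 : p.countGE (2 * i + 2) = p.countGE (2 * i + 3) + p.parts.count (2 * i + 2) :=
    p.countGE_eq_countGE_succ_add_count _
  have h3 : p.countGE (2 * i + 3) = p.countGE (2 * i + 4) + p.parts.count (2 * i + 3) :=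
    p.countGE_eq_countGE_succ_add_count _
  have := hc (2 * i + 1)
  have := hc (2 * i + 2)
  have := hc (2 * i + 3)
  rw [twoModularConjPart_succ, twoModularConjPart_add_two]
  omega

theorem twoModularConjPart_lt_four (hp : p.parts.Nodup) {i : ℕ}
    (h : p.twoModularConjPart (i + 2) = 0) : p.twoModularConjPart (i + 1) < 4 := by
  have hc := Multiset.nodup_iff_count_le_one.1 hp
  have h1 : p.countGE (2 * i + 1) = p.countGE (2 * i + 2) + p.parts.count (2 * i + 1) :=
    p.countGE_eq_countGE_succ_add_count _
  have h2 : p.countGE (2 * i + 2) = p.countGE (2 * i + 3) + p.parts.count (2 * i + 2) :=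
    p.countGE_eq_countGE_succ_add_count _
  have := hc (2 * i + 1)
  have := hc (2 * i + 2)
  rw [twoModularConjPart_add_two] at h
  rw [twoModularConjPart_succ]
  omega

theorem twoModularConjPart_succ_lt (hp : A1cond p) {i : ℕ}
    (hpos : 0 < p.twoModularConjPart (i + 2)) :
    p.twoModularConjPart (i + 2) < p.twoModularConjPart (i + 1) := by
  obtain ⟨-, hgap, hlast⟩ := hp
  by_contra! hle
  rw [twoModularConjPart_add_two, twoModularConjPart_succ] at hle
  rw [twoModularConjPart_add_two] at hpos
  have := p.countGE_antitone (show 2 * i + 1 ≤ 2 * i + 2 by omega)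
  have := p.countGE_antitone (show 2 * i + 2 ≤ 2 * i + 3 by omega)
  have := p.countGE_antitone (show 2 * i + 3 ≤ 2 * i + 4 by omega)
  obtain ⟨j, hj⟩ : ∃ j, p.countGE (2 * i + 4) = j := ⟨_, rfl⟩
  have hj1 : p.countGE (2 * i + 1) = j := by omega
  have hup : 2 * i + 4 ≤ (sortedParts p).getD (j - 1) 0 :=
    (p.le_getD_sortedParts_iff (by omega) _).2 (by omega)
  have hdown : (sortedParts p).getD j 0 < 2 * i + 1 :=
    not_le.1 fun h => by have := (p.le_getD_sortedParts_iff (by omega) j).1 h; omega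
  have hjL : j ≤ (sortedParts p).length := hj ▸ p.length_sortedParts ▸ p.countGE_le_card _
  rcases hjL.lt_or_eq with hjL | rfl
  · have := hgap (j - 1) (by omega)
    rw [Nat.sub_add_cancel (by omega)] at this
    omega
  · omega

theorem nodup_twoModularConj (hp : A1cond p) : p.twoModularConj.parts.Nodup := by
  refine Multiset.nodup_iff_count_le_one.2 fun v => ?_
  by_contra! hv
  have hv0 : 0 < v := p.twoModularConj.parts_pos (Multiset.count_pos.1 (by omega))
  obtain ⟨i, i', hi, hii', hv, hv'⟩ := p.exists_lt_of_one_lt_count_twoModularConj hv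
  obtain ⟨k, rfl⟩ : ∃ k, i = k + 1 := ⟨i - 1, by omega⟩
  have h1 := p.twoModularConjPart_antitone (show k + 1 ≤ k + 2 by omega)
  have h2 := p.twoModularConjPart_antitone (show k + 2 ≤ i' by omega)
  have := p.twoModularConjPart_succ_lt hp (i := k) (by omega)
  omega

theorem A1cond_twoModularConj (hp : p.parts.Nodup) : A1cond p.twoModularConj := by
  have hlen := p.length_sortedParts_twoModularConj_le
  refine ⟨onlyEvenRepeats_twoModularConj (p.onlyEvenRepeats_of_nodup hp), fun j hj => ?_, ?_⟩
  · rw [getD_sortedParts_twoModularConj _ (by omega), getD_sortedParts_twoModularConj _ (by omega)]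
    exact p.twoModularConjPart_succ_le_add_four hp j
  · by_cases h0 : (sortedParts p.twoModularConj).length = 0
    · simp [List.length_eq_zero_iff.1 h0]
    obtain ⟨k, hk⟩ := Nat.exists_eq_add_one_of_ne_zero h0
    rw [hk, Nat.add_sub_cancel, getD_sortedParts_twoModularConj _ (by omega)]
    refine p.twoModularConjPart_lt_four hp ?_
    rcases (show k + 1 < n ∨ k + 1 = n by omega) with hlt | heq
    · rw [← getD_sortedParts_twoModularConj _ hlt]
      exact List.getD_eq_default _ _ (by omega)
    · rw [twoModularConjPart_succ, countGE_eq_zero _ (by omega), countGE_eq_zero _ (by omega)]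

end Nat.Partition

theorem lemma_phi (n : ℕ) :
    ∃ e : {p : n.Partition // p.parts.Nodup} ≃ {p : n.Partition // A1cond p},
      ∀ l : {p : n.Partition // p.parts.Nodup},
        lo l.1 = lo (e l).1 ∧ la l.1 = 2 * (r2 (e l).1 : ℤ) + (lo (e l).1 : ℤ) := by
  refine ⟨⟨fun l => ⟨l.1.twoModularConj, l.1.A1cond_twoModularConj l.2⟩,
    fun a => ⟨a.1.twoModularConj, a.1.nodup_twoModularConj a.2⟩,
    fun l => Subtype.ext
      (Partition.twoModularConj_twoModularConj (l.1.onlyEvenRepeats_of_nodup l.2)),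
    fun a => Subtype.ext (Partition.twoModularConj_twoModularConj a.2.1)⟩, fun l => ?_⟩
  have h := l.1.onlyEvenRepeats_of_nodup l.2
  exact ⟨(Partition.lo_twoModularConj h).symm, Partition.la_eq_two_mul_r2_add_lo h⟩
end

section
/- There is a bijection between partitions of n into odd parts and partitions of n with no part divisible by 4 in which only even parts may repeat; under this bijection a partition μ into odd parts maps to β with n_o(μ) = l_o(β) and l(μ) = 2·r_2(β) + l_o(β). -/
open Nat

namespace CGJL

open Multiset

/-- Forward map on multisets: each odd part `i` with multiplicity `m` becomes
`i` with multiplicity `m % 2` and `2*i` with multiplicity `m / 2`. -/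
def phi (s : Multiset ℕ) : Multiset ℕ :=
  ∑ i ∈ s.toFinset, (Multiset.replicate (s.count i % 2) i +
    Multiset.replicate (s.count i / 2) (2 * i))

/-- Inverse map. -/
def psi (t : Multiset ℕ) : Multiset ℕ :=
  ∑ j ∈ t.toFinset, (if j % 2 = 1 then Multiset.replicate (t.count j) j
    else Multiset.replicate (2 * t.count j) (j / 2))

lemma filter_replicate (p : ℕ → Prop) [DecidablePred p] (n a : ℕ) :
    (Multiset.replicate n a).filter p = if p a then Multiset.replicate n a else 0 := by
  split_ifs with h
  · exact Multiset.filter_eq_self.2 fun b hb => (Multiset.eq_of_mem_replicate hb) ▸ h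
  · exact Multiset.filter_eq_nil.2 fun b hb => (Multiset.eq_of_mem_replicate hb) ▸ h

lemma card_filter_sum {ι : Type*} (F : Finset ι) (f : ι → Multiset ℕ) (p : ℕ → Prop)
    [DecidablePred p] :
    ((∑ i ∈ F, f i).filter p).card = ∑ i ∈ F, ((f i).filter p).card := by
  classical
  induction F using Finset.cons_induction with
  | empty => simp
  | cons a F ha ih =>
      rw [Finset.sum_cons, Finset.sum_cons, Multiset.filter_add, Multiset.card_add, ih]

lemma sum_sum {ι : Type*} (F : Finset ι) (f : ι → Multiset ℕ) :
    (∑ i ∈ F, f i).sum = ∑ i ∈ F, (f i).sum := by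
  classical
  induction F using Finset.cons_induction with
  | empty => simp
  | cons a F ha ih => rw [Finset.sum_cons, Finset.sum_cons, Multiset.sum_add, ih]

lemma sum_eq_toFinset (s : Multiset ℕ) : s.sum = ∑ i ∈ s.toFinset, s.count i * i := by
  conv_lhs => rw [← Multiset.toFinset_sum_count_nsmul_eq s]
  rw [sum_sum]
  refine Finset.sum_congr rfl fun i _ => ?_
  rw [Multiset.nsmul_singleton, Multiset.sum_replicate, smul_eq_mul]

lemma count_phi (s : Multiset ℕ) (hs : ∀ i ∈ s, i % 2 = 1) (a : ℕ) :
    (phi s).count a =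
      if a % 2 = 1 then s.count a % 2 else if a % 4 = 2 then s.count (a / 2) / 2 else 0 := by
  unfold phi
  rw [Multiset.count_sum']
  simp only [Multiset.count_add, Multiset.count_replicate]
  by_cases ha : a % 2 = 1
  · rw [if_pos ha, Finset.sum_eq_single a]
    · split_ifs <;> omega
    · intro i hi hne
      have hi' : i % 2 = 1 := hs i (Multiset.mem_toFinset.1 hi)
      have hne' : ¬ (i = a) := hne
      split_ifs <;> omega
    · intro h
      have hc : s.count a = 0 := Multiset.count_eq_zero_of_notMem
        (fun hm => h (Multiset.mem_toFinset.2 hm))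
      split_ifs <;> omega
  · rw [if_neg ha]
    by_cases h4 : a % 4 = 2
    · rw [if_pos h4, Finset.sum_eq_single (a / 2)]
      · split_ifs <;> omega
      · intro i hi hne
        have hi' : i % 2 = 1 := hs i (Multiset.mem_toFinset.1 hi)
        have hne' : ¬ (i = a / 2) := hne
        split_ifs <;> omega
      · intro h
        have hc : s.count (a / 2) = 0 := Multiset.count_eq_zero_of_notMem
          (fun hm => h (Multiset.mem_toFinset.2 hm))
        split_ifs <;> omega
    · rw [if_neg h4]
      refine Finset.sum_eq_zero fun i hi => ?_
      have hi' : i % 2 = 1 := hs i (Multiset.mem_toFinset.1 hi)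
      split_ifs <;> omega

lemma count_psi (t : Multiset ℕ) (h4 : ∀ j ∈ t, ¬ 4 ∣ j) (a : ℕ) :
    (psi t).count a = if a % 2 = 1 then t.count a + 2 * t.count (2 * a) else 0 := by
  unfold psi
  rw [Multiset.count_sum']
  by_cases ha : a % 2 = 1
  · rw [if_pos ha]
    have key : ∀ j ∈ t.toFinset,
        (Multiset.count a (if j % 2 = 1 then Multiset.replicate (t.count j) j
          else Multiset.replicate (2 * t.count j) (j / 2))) =
        (if j = a then t.count a else 0) + (if j = 2 * a then 2 * t.count (2 * a) else 0) := by
      intro j hj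
      have hj4 : ¬ 4 ∣ j := h4 j (Multiset.mem_toFinset.1 hj)
      by_cases hjo : j % 2 = 1
      · rw [if_pos hjo, Multiset.count_replicate]
        have h2 : ¬ (j = 2 * a) := by omega
        rw [if_neg h2, add_zero]
        by_cases he : j = a
        · subst he; rfl
        · rw [if_neg he, if_neg he]
      · rw [if_neg hjo, Multiset.count_replicate]
        have h1 : ¬ (j = a) := by omega
        rw [if_neg h1, zero_add]
        by_cases he : j = 2 * a
        · subst he
          rw [if_pos (by omega : 2 * a / 2 = a), if_pos rfl]
        · rw [if_neg he, if_neg (by omega : ¬ (j / 2 = a))]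
    rw [Finset.sum_congr rfl key, Finset.sum_add_distrib]
    rw [Finset.sum_ite_eq' t.toFinset a (fun _ => t.count a),
      Finset.sum_ite_eq' t.toFinset (2 * a) (fun _ => 2 * t.count (2 * a))]
    have c1 : a ∉ t.toFinset → t.count a = 0 := fun h =>
      Multiset.count_eq_zero_of_notMem (fun hm => h (Multiset.mem_toFinset.2 hm))
    have c2 : 2 * a ∉ t.toFinset → t.count (2 * a) = 0 := fun h =>
      Multiset.count_eq_zero_of_notMem (fun hm => h (Multiset.mem_toFinset.2 hm))
    by_cases h1 : a ∈ t.toFinset <;> by_cases h2 : 2 * a ∈ t.toFinset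
    · simp [h1, h2]
    · simp [h1, h2, c2 h2]
    · simp [h1, h2, c1 h1]
    · simp [h1, h2, c1 h1, c2 h2]
  · rw [if_neg ha]
    refine Finset.sum_eq_zero fun j hj => ?_
    have hj4 : ¬ 4 ∣ j := h4 j (Multiset.mem_toFinset.1 hj)
    by_cases hjo : j % 2 = 1
    · rw [if_pos hjo, Multiset.count_replicate, if_neg (by omega : ¬ (j = a))]
    · rw [if_neg hjo, Multiset.count_replicate, if_neg (by omega : ¬ (j / 2 = a))]

lemma phi_no_four (s : Multiset ℕ) (hs : ∀ i ∈ s, i % 2 = 1) :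
    ∀ j ∈ phi s, ¬ 4 ∣ j := by
  intro j hj hd
  have hc := count_phi s hs j
  obtain ⟨k, rfl⟩ := hd
  have h1 : ¬ (4 * k % 2 = 1) := by omega
  have h2 : ¬ (4 * k % 4 = 2) := by omega
  rw [if_neg h1, if_neg h2] at hc
  exact absurd hc (Multiset.count_ne_zero.2 hj)

lemma psi_phi (s : Multiset ℕ) (hs : ∀ i ∈ s, i % 2 = 1) : psi (phi s) = s := by
  ext a
  rw [count_psi _ (phi_no_four s hs) a]
  by_cases ha : a % 2 = 1
  · rw [if_pos ha, count_phi s hs a, count_phi s hs (2 * a)]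
    have h1 : ¬ (2 * a % 2 = 1) := by omega
    have h2 : 2 * a % 4 = 2 := by omega
    have h3 : 2 * a / 2 = a := by omega
    rw [if_pos ha, if_neg h1, if_pos h2, h3]
    omega
  · rw [if_neg ha]
    symm
    exact Multiset.count_eq_zero_of_notMem fun hm => ha (hs a hm)

lemma psi_odd (t : Multiset ℕ) (h4 : ∀ j ∈ t, ¬ 4 ∣ j) :
    ∀ i ∈ psi t, i % 2 = 1 := by
  intro i hi
  by_contra h
  have hc := count_psi t h4 i
  rw [if_neg h] at hc
  exact absurd hc (Multiset.count_ne_zero.2 hi)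

lemma phi_psi (t : Multiset ℕ) (h4 : ∀ j ∈ t, ¬ 4 ∣ j)
    (hrep : ∀ i, 1 < t.count i → 2 ∣ i) : phi (psi t) = t := by
  ext a
  rw [count_phi _ (psi_odd t h4) a]
  by_cases ha : a % 2 = 1
  · rw [if_pos ha, count_psi t h4 a, if_pos ha]
    have hle : t.count a ≤ 1 := by
      by_contra hlt
      have := hrep a (by omega)
      omega
    omega
  · rw [if_neg ha]
    by_cases h42 : a % 4 = 2
    · rw [if_pos h42, count_psi t h4 (a / 2)]
      have ho : a / 2 % 2 = 1 := by omega
      have he : 2 * (a / 2) = a := by omega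
      rw [if_pos ho, he]
      have hle : t.count (a / 2) ≤ 1 := by
        by_contra hlt
        have := hrep (a / 2) (by omega)
        omega
      omega
    · rw [if_neg h42]
      symm
      refine Multiset.count_eq_zero_of_notMem fun hm => h4 a hm ?_
      omega

lemma sum_phi (s : Multiset ℕ) : (phi s).sum = s.sum := by
  unfold phi
  rw [sum_sum, sum_eq_toFinset s]
  refine Finset.sum_congr rfl fun i _ => ?_
  rw [Multiset.sum_add, Multiset.sum_replicate, Multiset.sum_replicate,
    smul_eq_mul, smul_eq_mul]
  have h : s.count i % 2 + 2 * (s.count i / 2) = s.count i := by omega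
  conv_rhs => rw [← h]
  ring

lemma sum_psi (t : Multiset ℕ) (h4 : ∀ j ∈ t, ¬ 4 ∣ j) : (psi t).sum = t.sum := by
  unfold psi
  rw [sum_sum, sum_eq_toFinset t]
  refine Finset.sum_congr rfl fun j hj => ?_
  have hj4 : ¬ 4 ∣ j := h4 j (Multiset.mem_toFinset.1 hj)
  by_cases hjo : j % 2 = 1
  · rw [if_pos hjo, Multiset.sum_replicate, smul_eq_mul]
  · rw [if_neg hjo, Multiset.sum_replicate, smul_eq_mul]
    have : 2 * (j / 2) = j := by omega
    rw [show 2 * t.count j * (j / 2) = t.count j * (2 * (j / 2)) from by ring, this]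

lemma lo_phi (s : Multiset ℕ) (hs : ∀ i ∈ s, i % 2 = 1) :
    ((phi s).filter (fun i => i % 2 = 1)).card = ∑ i ∈ s.toFinset, s.count i % 2 := by
  unfold phi
  rw [card_filter_sum]
  refine Finset.sum_congr rfl fun i hi => ?_
  have hi' : i % 2 = 1 := hs i (Multiset.mem_toFinset.1 hi)
  rw [Multiset.filter_add, filter_replicate, filter_replicate]
  have h2 : ¬ (2 * i % 2 = 1) := by omega
  rw [if_pos hi', if_neg h2]
  simp

lemma r2_phi (s : Multiset ℕ) (hs : ∀ i ∈ s, i % 2 = 1) :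
    ((phi s).filter (fun i => i % 4 = 2)).card = ∑ i ∈ s.toFinset, s.count i / 2 := by
  unfold phi
  rw [card_filter_sum]
  refine Finset.sum_congr rfl fun i hi => ?_
  have hi' : i % 2 = 1 := hs i (Multiset.mem_toFinset.1 hi)
  rw [Multiset.filter_add, filter_replicate, filter_replicate]
  have h1 : ¬ (i % 4 = 2) := by omega
  have h2 : 2 * i % 4 = 2 := by omega
  rw [if_neg h1, if_pos h2]
  simp

end CGJL

namespace CGJL

lemma phi_pos (s : Multiset ℕ) (hs : ∀ i ∈ s, i % 2 = 1) : ∀ {i}, i ∈ phi s → 0 < i := by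
  intro i hi
  by_contra h
  have hi0 : i = 0 := by omega
  subst hi0
  have hc := count_phi s hs 0
  rw [if_neg (by norm_num), if_neg (by norm_num)] at hc
  exact absurd hc (Multiset.count_ne_zero.2 hi)

lemma psi_pos (t : Multiset ℕ) (h4 : ∀ j ∈ t, ¬ 4 ∣ j) : ∀ {i}, i ∈ psi t → 0 < i := by
  intro i hi
  by_contra h
  have hi0 : i = 0 := by omega
  subst hi0
  have hc := count_psi t h4 0
  rw [if_neg (by norm_num)] at hc
  exact absurd hc (Multiset.count_ne_zero.2 hi)

lemma phi_rep (s : Multiset ℕ) (hs : ∀ i ∈ s, i % 2 = 1) :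
    ∀ i, 1 < (phi s).count i → 2 ∣ i := by
  intro i h
  by_contra h2
  have hio : i % 2 = 1 := by omega
  rw [count_phi s hs i, if_pos hio] at h
  omega

def fwdPartition {n : ℕ} (p : n.Partition) (hp : ∀ i ∈ p.parts, i % 2 = 1) : n.Partition :=
  ⟨phi p.parts, phi_pos _ hp, by rw [sum_phi]; exact p.parts_sum⟩

def bwdPartition {n : ℕ} (p : n.Partition) (hp : ∀ i ∈ p.parts, ¬ 4 ∣ i) : n.Partition :=
  ⟨psi p.parts, psi_pos _ hp, by rw [sum_psi _ hp]; exact p.parts_sum⟩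

end CGJL

theorem lemma_psi (n : ℕ) :
    ∃ e : {p : n.Partition // ∀ i ∈ p.parts, Odd i} ≃ {p : n.Partition // A2cond p},
      ∀ m : {p : n.Partition // ∀ i ∈ p.parts, Odd i},
        no m.1 = lo (e m).1 ∧ m.1.parts.card = 2 * r2 (e m).1 + lo (e m).1 := by
  classical
  have hsOdd : ∀ (m : {p : n.Partition // ∀ i ∈ p.parts, Odd i}), ∀ i ∈ m.1.parts, i % 2 = 1 :=
    fun m i h => Nat.odd_iff.1 (m.2 i h)
  refine ⟨⟨fun m => ⟨CGJL.fwdPartition m.1 (hsOdd m),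
      CGJL.phi_no_four _ (hsOdd m), CGJL.phi_rep _ (hsOdd m)⟩,
    fun m => ⟨CGJL.bwdPartition m.1 m.2.1,
      fun i h => Nat.odd_iff.2 (CGJL.psi_odd _ m.2.1 i h)⟩, ?_, ?_⟩, ?_⟩
  · intro m
    exact Subtype.ext (Nat.Partition.ext (CGJL.psi_phi _ (hsOdd m)))
  · intro m
    exact Subtype.ext (Nat.Partition.ext (CGJL.phi_psi _ m.2.1 m.2.2))
  · intro m
    constructor
    · show no m.1 = ((CGJL.phi m.1.parts).filter (fun i => i % 2 = 1)).card
      rw [CGJL.lo_phi _ (hsOdd m)]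
      unfold no
      rw [Finset.card_filter]
      exact Finset.sum_congr rfl fun i _ => by split_ifs with h <;> omega
    · show m.1.parts.card = 2 * ((CGJL.phi m.1.parts).filter (fun i => i % 4 = 2)).card +
        ((CGJL.phi m.1.parts).filter (fun i => i % 2 = 1)).card
      rw [CGJL.r2_phi _ (hsOdd m), CGJL.lo_phi _ (hsOdd m),
        ← Multiset.toFinset_sum_count_eq, Finset.mul_sum, ← Finset.sum_add_distrib]
      exact Finset.sum_congr rfl fun i _ => by omega
end

section
/- Let N be an integer and A = {a_1 < a_2 < ... < a_r} ⊆ {1,...,N−1}. Then for every n, the number of partitions of n in which each part is congruent to 0 or some a_i mod N, only multiples of N may repeat, successive parts differ by at most N (strictly less than N if either part is divisible by N), and the smallest part is less than N, equals the number of partitions of n into distinct parts each congruent to some a_i mod N. -/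
open Nat

/-!
Sort the parts increasingly. On the left-hand side every part is the least number with its residue
mod `N` that may follow the previous part (`nextPart`), so such a partition is the same thing as its
word of residues: a word over `{0} ∪ A` that does not start with `0`. Cutting the word before each
nonzero letter gives blocks `(a, k)`: a residue `a ∈ A` followed by a run of `k` zeros. On the
right-hand side a partition into distinct parts is the same thing as a list of blocks `(a, g)`:
each part is the `(g + 1)`-st number above the previous part that is `≡ a` (`liftGaps`).

In both cases the weight is the weight of the minimal lifting of the residues `a` plus `N` times a
correction depending on the runs `k`, resp. the gaps `g`. Processing the blocks from the last one,
the recursion `runsToGaps`, steered by the descents of the residue sequence, is a bijection on lists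
of run lengths which turns the first correction into the second (`weightedSum`).
-/

namespace List

lemma isChain_iff_getD {α : Type*} {R : α → α → Prop} (l : List α) (d : α) :
    (∀ j, j + 1 < l.length → R (l.getD j d) (l.getD (j + 1) d)) ↔ IsChain R l := by
  rw [isChain_iff_getElem]
  refine forall_congr' fun j => ⟨fun h hj => ?_, fun h hj => ?_⟩
  all_goals
    simpa only [getD_eq_getElem?_getD, getElem?_eq_getElem hj,
      getElem?_eq_getElem (Nat.lt_of_succ_lt hj), Option.getD_some] using h hj

lemma getD_reverse_length_sub_one {α : Type*} (l : List α) (d : α) :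
    l.reverse.getD (l.reverse.length - 1) d = l.headD d := by
  cases l <;> simp [getD_eq_getElem?_getD]

lemma isChain_and_iff {α : Type*} {R S : α → α → Prop} {l : List α} :
    IsChain (fun x y => R x y ∧ S x y) l ↔ IsChain R l ∧ IsChain S l := by
  simp only [isChain_iff_getElem, forall_and]

lemma forall_one_lt_count_iff_isChain {α : Type*} [PartialOrder α] [DecidableEq α] {P : α → Prop}
    {l : List α} (hl : l.Pairwise (· ≤ ·)) :
    (∀ i, 1 < l.count i → P i) ↔ IsChain (fun x y => x = y → P x) l := by
  induction l with
  | nil => simp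
  | cons x l ih =>
    rw [pairwise_cons] at hl
    rw [isChain_cons, ← ih hl.2]
    constructor
    · intro h
      refine ⟨fun y hy hxy => h x ?_, fun i hi => h i ?_⟩
      · subst hxy
        have := count_pos_iff.2 (mem_of_mem_head? hy)
        rw [count_cons_self]
        omega
      · rw [count_cons]
        omega
    · rintro ⟨hhead, htail⟩ i hi
      by_cases hxi : x = i
      · subst hxi
        rw [count_cons_self] at hi
        have hmem : x ∈ l := count_pos_iff.1 (by omega)
        obtain ⟨y, l', rfl⟩ := exists_cons_of_ne_nil (ne_nil_of_mem hmem)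
        refine hhead y rfl (le_antisymm (hl.1 y mem_cons_self) ?_)
        rcases mem_cons.1 hmem with h | h
        exacts [h.ge, (pairwise_cons.1 hl.2).1 x h]
      · rw [count_cons_of_ne hxi] at hi
        exact htail i hi

lemma sum_map_add_const {M : Type*} [AddCommMonoid M] (l : List M) (c : M) :
    (l.map (· + c)).sum = l.sum + l.length • c := by
  simp [sum_map_add]

end List

lemma Multiset.sort_coe_of_pairwise {α : Type*} {r : α → α → Prop} [DecidableRel r]
    [IsTrans α r] [Std.Antisymm r] [Std.Total r] {l : List α} (hl : l.Pairwise r) :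
    (l : Multiset α).sort r = l := by
  rw [coe_sort, List.mergeSort_eq_self _ hl]

namespace AndrewsOlsson

open List

variable {N : ℕ}

/-! ### Admissible successors -/

def carry (r s : ℕ) : ℕ := if (0 < r ∨ 0 < s) ∧ s ≤ r then 1 else 0

/-- The least part with residue `s` that may follow the part `x`
(see `Admissible.nextPart_mod_eq`). -/
def nextPart (N x s : ℕ) : ℕ := N * (x / N + carry (x % N) s) + s

/-- The condition on two consecutive parts `x ≤ y` of the partitions counted on the left. -/
def Admissible (N x y : ℕ) : Prop :=
  x ≤ y ∧ y ≤ x + N ∧ ((N ∣ y ∨ N ∣ x) → y < x + N) ∧ (x = y → N ∣ x)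

lemma exists_eq_mul_add (hN : 0 < N) (x : ℕ) : ∃ q r, r < N ∧ x = N * q + r :=
  ⟨x / N, x % N, Nat.mod_lt x hN, (Nat.div_add_mod x N).symm⟩

lemma dvd_mul_add_iff {q r : ℕ} (hr : r < N) : N ∣ N * q + r ↔ r = 0 := by
  rw [Nat.dvd_add_right (dvd_mul_right N q)]
  exact ⟨fun h => Nat.eq_zero_of_dvd_of_lt h hr, fun h => h ▸ dvd_zero N⟩

lemma nextPart_mul_add {q r : ℕ} (hr : r < N) (s : ℕ) :
    nextPart N (N * q + r) s = N * (q + carry r s) + s := by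
  have hN : 0 < N := by omega
  rw [nextPart, Nat.mul_add_div hN, Nat.div_eq_of_lt hr, Nat.mul_add_mod, Nat.mod_eq_of_lt hr,
    add_zero]

lemma nextPart_mod {x s : ℕ} (hs : s < N) : nextPart N x s % N = s := by
  rw [nextPart, Nat.mul_add_mod, Nat.mod_eq_of_lt hs]

lemma nextPart_add_mul (hN : 0 < N) (x s c : ℕ) :
    nextPart N (x + N * c) s = nextPart N x s + N * c := by
  simp only [nextPart, Nat.add_mul_mod_self_left, Nat.add_mul_div_left _ _ hN]
  ring

lemma nextPart_zero_left (s : ℕ) : nextPart N 0 s = s := by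
  simp [nextPart, carry]
  omega

lemma nextPart_zero_right {r : ℕ} (hr : 0 < r) (hrN : r < N) : nextPart N r 0 = N := by
  simpa [carry, hr] using nextPart_mul_add (q := 0) hrN 0

lemma nextPart_mul_of_pos (hN : 0 < N) {q s : ℕ} (hs : 0 < s) :
    nextPart N (N * q) s = N * q + s := by
  simpa [carry, hs.ne'] using nextPart_mul_add (q := q) hN s

lemma lt_nextPart {x s : ℕ} (hs : 0 < s) (hsN : s < N) : x < nextPart N x s := by
  obtain ⟨q, r, hr, rfl⟩ := exists_eq_mul_add (hs.trans hsN) x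
  rw [nextPart_mul_add hr, carry]
  split_ifs <;> simp only [mul_add] <;> omega

lemma admissible_nextPart {x s : ℕ} (hs : s < N) : Admissible N x (nextPart N x s) := by
  obtain ⟨q, r, hr, rfl⟩ := exists_eq_mul_add (by omega : 0 < N) x
  rw [nextPart_mul_add hr, Admissible, dvd_mul_add_iff hs, dvd_mul_add_iff hr, carry]
  split_ifs <;> simp only [mul_add, mul_one, add_zero] <;> omega

lemma Admissible.nextPart_mod_eq (hN : 0 < N) {x y : ℕ} (h : Admissible N x y) :
    nextPart N x (y % N) = y := by
  obtain ⟨q, r, hr, rfl⟩ := exists_eq_mul_add hN x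
  obtain ⟨q', s, hs, rfl⟩ := exists_eq_mul_add hN y
  obtain ⟨hxy, hyx, hlt, heq⟩ := h
  rw [dvd_mul_add_iff hs, dvd_mul_add_iff hr] at hlt
  rw [dvd_mul_add_iff hr] at heq
  have hq : q ≤ q' := by
    by_contra! h
    nlinarith
  have hq' : q' ≤ q + 1 := by
    by_contra! h
    nlinarith
  rw [Nat.mul_add_mod, Nat.mod_eq_of_lt hs, nextPart_mul_add hr, carry]
  obtain rfl | rfl : q' = q ∨ q' = q + 1 := by omega
  all_goals (simp only [mul_add, mul_one] at *; split_ifs <;> omega)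

lemma nextPart_le_of_lt (hN : 0 < N) {x y : ℕ} (hs : 0 < y % N) (hxy : x < y) :
    nextPart N x (y % N) ≤ y := by
  obtain ⟨q, r, hr, rfl⟩ := exists_eq_mul_add hN x
  obtain ⟨q', s, hsN, rfl⟩ := exists_eq_mul_add hN y
  rw [Nat.mul_add_mod, Nat.mod_eq_of_lt hsN] at hs ⊢
  rw [nextPart_mul_add hr, carry]
  rcases lt_trichotomy q q' with h | rfl | h
  · split_ifs <;> nlinarith
  · split_ifs <;> simp only [mul_add, mul_one, add_zero] <;> omega
  · nlinarith

lemma nextPart_add_mul_div (hN : 0 < N) {x y : ℕ} (hs : 0 < y % N) (hxy : x < y) :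
    nextPart N x (y % N) + N * ((y - nextPart N x (y % N)) / N) = y := by
  have hle := nextPart_le_of_lt hN hs hxy
  have hdvd : N ∣ y - nextPart N x (y % N) :=
    Nat.dvd_of_mod_eq_zero (Nat.sub_mod_eq_zero_of_mod_eq (nextPart_mod (Nat.mod_lt y hN)).symm)
  rw [Nat.mul_div_cancel' hdvd]
  omega

/-! ### Residue words -/

def liftWord (N : ℕ) : ℕ → List ℕ → List ℕ
  | _, [] => []
  | x, s :: w => nextPart N x s :: liftWord N (nextPart N x s) w

@[simp] lemma liftWord_nil (x : ℕ) : liftWord N x [] = [] := rfl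

@[simp] lemma liftWord_cons (x s : ℕ) (w : List ℕ) :
    liftWord N x (s :: w) = nextPart N x s :: liftWord N (nextPart N x s) w := rfl

@[simp] lemma length_liftWord (x : ℕ) (w : List ℕ) : (liftWord N x w).length = w.length := by
  induction w generalizing x <;> simp [*]

lemma map_mod_liftWord {x : ℕ} {w : List ℕ} (hw : ∀ s ∈ w, s < N) :
    (liftWord N x w).map (· % N) = w := by
  induction w generalizing x with
  | nil => rfl
  | cons s w ih =>
    rw [forall_mem_cons] at hw
    simp [nextPart_mod hw.1, ih hw.2]

lemma isChain_liftWord {x : ℕ} {w : List ℕ} (hw : ∀ s ∈ w, s < N) :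
    IsChain (Admissible N) (x :: liftWord N x w) := by
  induction w generalizing x with
  | nil => exact isChain_singleton x
  | cons s w ih =>
    rw [forall_mem_cons] at hw
    exact (ih hw.2).cons_cons (admissible_nextPart hw.1)

lemma liftWord_map_mod (hN : 0 < N) {x : ℕ} {ℓ : List ℕ} (h : IsChain (Admissible N) (x :: ℓ)) :
    liftWord N x (ℓ.map (· % N)) = ℓ := by
  induction ℓ generalizing x with
  | nil => rfl
  | cons y ℓ ih =>
    rw [isChain_cons_cons] at h
    simp [h.1.nextPart_mod_eq hN, ih h.2]

lemma zero_notMem_liftWord {w : List ℕ} (hw : w.head? ≠ some 0) (hwN : ∀ s ∈ w, s < N) :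
    0 ∉ liftWord N 0 w := by
  rcases w with _ | ⟨s, w⟩
  · simp
  · have hs : 0 < s := Nat.pos_of_ne_zero (by simpa using hw)
    have h := isChain_liftWord (x := 0) hwN
    rw [liftWord_cons, nextPart_zero_left] at h ⊢
    have hle := isChain_iff_pairwise.1 (h.tail.imp fun _ _ hxy => hxy.1)
    intro h0
    rcases mem_cons.1 h0 with h0 | h0
    · omega
    · exact absurd (rel_of_pairwise_cons hle h0) (by omega)

lemma liftWord_add_mul (hN : 0 < N) (x c : ℕ) (w : List ℕ) :
    liftWord N (x + N * c) w = (liftWord N x w).map (· + N * c) := by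
  induction w generalizing x with
  | nil => rfl
  | cons s w ih => simp [nextPart_add_mul hN, ih]

lemma liftWord_of_pos_head (hN : 0 < N) {s : ℕ} (hs : 0 < s) (x : ℕ) (w : List ℕ) :
    liftWord N x (s :: w) = (liftWord N 0 (s :: w)).map (· + N * (x / N + carry (x % N) s)) := by
  have h : nextPart N x s = nextPart N (0 + N * (x / N + carry (x % N) s)) s := by
    rw [zero_add, nextPart_mul_of_pos hN hs]
    rfl
  rw [← liftWord_add_mul hN, liftWord_cons, h]
  rfl

lemma liftWord_mul_replicate_zero (hN : 0 < N) (q j : ℕ) (w : List ℕ) :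
    liftWord N (N * q) (replicate j 0 ++ w) = replicate j (N * q) ++ liftWord N (N * q) w := by
  have h : nextPart N (N * q) 0 = N * q := by
    simpa [carry] using nextPart_mul_add (q := q) (r := 0) hN 0
  induction j with
  | zero => rfl
  | succ j ih => simp [replicate_succ, h, ih]

lemma liftWord_replicate_zero_append {b : ℕ} (hb : 0 < b) (hbN : b < N) (k : ℕ) (w : List ℕ) :
    liftWord N b (replicate (k + 1) 0 ++ w) = replicate (k + 1) N ++ liftWord N N w := by
  simpa [replicate_succ, nextPart_zero_right hb hbN] using
    liftWord_mul_replicate_zero (N := N) (hb.trans hbN) 1 k w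

lemma liftWord_replicate_zero_append_cons (hN : 0 < N) {b s : ℕ} (hb : 0 < b) (hbN : b < N)
    (hs : 0 < s) (k : ℕ) (w : List ℕ) :
    liftWord N b (replicate k 0 ++ s :: w) =
      replicate k N ++ (liftWord N 0 (s :: w)).map (· + N * if 0 < k ∨ s ≤ b then 1 else 0) := by
  rcases k with _ | k
  · have hcarry : carry b s = if s ≤ b then 1 else 0 := by simp [carry, hb]
    simpa [Nat.div_eq_of_lt hbN, Nat.mod_eq_of_lt hbN, hcarry] using
      liftWord_of_pos_head hN hs b w
  · rw [liftWord_replicate_zero_append hb hbN, ← liftWord_add_mul hN]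
    simp

/-- The block `(a, k)` stands for the letter `a` followed by `k` zeros. -/
def toWord (bs : List (ℕ × ℕ)) : List ℕ := bs.flatMap fun p => p.1 :: replicate p.2 0

/-- The blocks of a word, together with the number of its leading zeros. -/
def parseWord : List ℕ → List (ℕ × ℕ) × ℕ
  | [] => ([], 0)
  | s :: w =>
    if s = 0 then ((parseWord w).1, (parseWord w).2 + 1)
    else ((s, (parseWord w).2) :: (parseWord w).1, 0)

@[simp] lemma toWord_nil : toWord [] = [] := rfl

@[simp] lemma toWord_cons (p : ℕ × ℕ) (bs : List (ℕ × ℕ)) :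
    toWord (p :: bs) = p.1 :: (replicate p.2 0 ++ toWord bs) := rfl

lemma length_toWord (bs : List (ℕ × ℕ)) :
    (toWord bs).length = bs.length + (bs.map Prod.snd).sum := by
  induction bs with
  | nil => rfl
  | cons p bs ih =>
    simp [ih]
    omega

lemma mem_toWord {bs : List (ℕ × ℕ)} {s : ℕ} (h : s ∈ toWord bs) :
    s = 0 ∨ s ∈ bs.map Prod.fst := by
  simp only [toWord, mem_flatMap, mem_cons, mem_replicate] at h
  obtain ⟨p, hp, rfl | ⟨-, rfl⟩⟩ := h
  exacts [Or.inr (mem_map_of_mem hp), Or.inl rfl]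

lemma head?_toWord_ne_zero {bs : List (ℕ × ℕ)} (h : ∀ a ∈ bs.map Prod.fst, a ≠ 0) :
    (toWord bs).head? ≠ some 0 := by
  cases bs with
  | nil => simp
  | cons p bs => simpa using h p.1 (mem_map_of_mem mem_cons_self)

lemma replicate_append_toWord_parseWord (w : List ℕ) :
    replicate (parseWord w).2 0 ++ toWord (parseWord w).1 = w := by
  induction w with
  | nil => rfl
  | cons s w ih =>
    rw [parseWord]
    split_ifs with hs
    · simp [replicate_succ, ih, hs]
    · simpa using ih

lemma toWord_parseWord {w : List ℕ} (hw : w.head? ≠ some 0) : toWord (parseWord w).1 = w := by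
  have h := replicate_append_toWord_parseWord w
  rcases hz : (parseWord w).2 with _ | z
  · simpa [hz] using h
  · rw [hz, replicate_succ] at h
    rw [← h] at hw
    simp at hw

lemma parseWord_replicate_append (z : ℕ) (w : List ℕ) :
    parseWord (replicate z 0 ++ w) = ((parseWord w).1, (parseWord w).2 + z) := by
  induction z with
  | zero => rfl
  | succ z ih => simp [replicate_succ, parseWord, ih, add_assoc]

lemma parseWord_toWord {bs : List (ℕ × ℕ)} (hbs : ∀ a ∈ bs.map Prod.fst, a ≠ 0) :
    parseWord (toWord bs) = (bs, 0) := by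
  induction bs with
  | nil => rfl
  | cons p bs ih =>
    rw [map_cons, forall_mem_cons] at hbs
    simp [parseWord, hbs.1, parseWord_replicate_append, ih hbs.2]

lemma map_fst_parseWord (w : List ℕ) : (parseWord w).1.map Prod.fst = w.filter (· ≠ 0) := by
  induction w with
  | nil => rfl
  | cons s w ih =>
    rw [parseWord]
    split_ifs with hs <;> simp [hs, ih]

/-! ### Run lengths and gaps -/

def weightedSum : List ℕ → ℕ
  | [] => 0
  | a :: g => (g.length + 1) * a + weightedSum g

/-- Puts a block with a run of `k` zeros in front of the gap list `g`; `d` records whether the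
residue of that block is at least the next residue. The cases are dictated by
`weightedSum_pushRun`, which has to match the weight the block adds in `sum_liftWord_toWord`. -/
def pushRun : Bool → ℕ → List ℕ → List ℕ
  | true, k, g => g ++ [k]
  | false, 0, g => 0 :: g
  | false, j + 1, g => (g ++ [j]).modifyHead (· + 1)

def popRun : Bool → List ℕ → ℕ × List ℕ
  | true, g => (g.getLastD 0, g.dropLast)
  | false, [] => (0, [])
  | false, 0 :: g => (0, g)
  | false, (c + 1) :: g => ((c :: g).getLastD 0 + 1, (c :: g).dropLast)

def runsToGaps : List Bool → List ℕ → List ℕ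
  | [], k => k
  | _ :: _, [] => []
  | d :: δ, k :: ks => pushRun d k (runsToGaps δ ks)

def gapsToRuns : List Bool → List ℕ → List ℕ
  | [], g => g
  | _ :: _, [] => []
  | d :: δ, c :: g => (popRun d (c :: g)).1 :: gapsToRuns δ (popRun d (c :: g)).2

@[simp] lemma runsToGaps_nil (k : List ℕ) : runsToGaps [] k = k := rfl

@[simp] lemma runsToGaps_cons_cons (d : Bool) (δ : List Bool) (k : ℕ) (ks : List ℕ) :
    runsToGaps (d :: δ) (k :: ks) = pushRun d k (runsToGaps δ ks) := rfl

@[simp] lemma length_pushRun (d : Bool) (k : ℕ) (g : List ℕ) :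
    (pushRun d k g).length = g.length + 1 := by
  rcases d with _ | _ <;> rcases k with _ | _ <;> simp [pushRun]

lemma sum_pushRun (d : Bool) (k : ℕ) (g : List ℕ) : (pushRun d k g).sum = g.sum + k := by
  rcases d with _ | _ <;> rcases k with _ | k
  · simp [pushRun]
  · cases g
    · simp [pushRun]
    · simp [pushRun]
      omega
  · simp [pushRun]
  · simp [pushRun]

lemma weightedSum_append_singleton (g : List ℕ) (j : ℕ) :
    weightedSum (g ++ [j]) = weightedSum g + g.sum + j := by
  induction g with
  | nil => simp [weightedSum]
  | cons a g ih =>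
    simp [weightedSum, ih]
    ring

lemma weightedSum_pushRun (d : Bool) (k : ℕ) (g : List ℕ) :
    weightedSum (pushRun d k g) = weightedSum g + (if d ∨ 0 < k then g.sum + k else 0) +
      (if d = false ∧ 0 < k then g.length else 0) := by
  rcases d with _ | _ <;> rcases k with _ | k
  · simp [pushRun, weightedSum]
  · cases g
    · simp [pushRun, weightedSum]
    · simp [pushRun, weightedSum, weightedSum_append_singleton]
      ring
  · simp [pushRun, weightedSum_append_singleton]
  · simp [pushRun, weightedSum_append_singleton, add_assoc]

lemma popRun_pushRun (d : Bool) (k : ℕ) (g : List ℕ) : popRun d (pushRun d k g) = (k, g) := by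
  rcases d with _ | _ <;> rcases k with _ | k
  · rfl
  · rcases g with _ | ⟨a, g⟩
    · rfl
    · show popRun false ((a + 1) :: (g ++ [k])) = _
      rw [popRun, ← cons_append, getLastD_concat, dropLast_concat]
  · simp [pushRun, popRun]
  · simp [pushRun, popRun]

lemma pushRun_popRun (d : Bool) {g : List ℕ} (hg : g ≠ []) :
    pushRun d (popRun d g).1 (popRun d g).2 = g := by
  rcases d with _ | _
  · rcases g with _ | ⟨_ | c, g⟩
    · exact absurd rfl hg
    · rfl
    · simp only [popRun, pushRun, getLastD_eq_getLast?, getLast?_eq_some_getLast (cons_ne_nil c g),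
        Option.getD_some, dropLast_append_getLast]
      rfl
  · simp [popRun, pushRun, getLastD_eq_getLast?, getLast?_eq_some_getLast hg,
      dropLast_append_getLast]

@[simp] lemma length_runsToGaps (δ : List Bool) (k : List ℕ) :
    (runsToGaps δ k).length = k.length := by
  induction δ generalizing k with
  | nil => rfl
  | cons d δ ih => cases k <;> simp [runsToGaps, ih]

lemma sum_runsToGaps (δ : List Bool) (k : List ℕ) : (runsToGaps δ k).sum = k.sum := by
  induction δ generalizing k with
  | nil => rfl
  | cons d δ ih => cases k <;> simp [runsToGaps, sum_pushRun, ih, add_comm]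

lemma gapsToRuns_runsToGaps (δ : List Bool) (k : List ℕ) : gapsToRuns δ (runsToGaps δ k) = k := by
  induction δ generalizing k with
  | nil => rfl
  | cons d δ ih =>
    rcases k with _ | ⟨k, ks⟩
    · rfl
    · obtain ⟨c, g, hg⟩ : ∃ c g, pushRun d k (runsToGaps δ ks) = c :: g :=
        exists_cons_of_ne_nil (ne_nil_of_length_pos (by simp))
      rw [runsToGaps, hg, gapsToRuns, ← hg, popRun_pushRun, ih]

lemma runsToGaps_gapsToRuns (δ : List Bool) (g : List ℕ) : runsToGaps δ (gapsToRuns δ g) = g := by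
  induction δ generalizing g with
  | nil => rfl
  | cons d δ ih =>
    rcases g with _ | ⟨c, g⟩
    · rfl
    · rw [gapsToRuns, runsToGaps, ih, pushRun_popRun d (cons_ne_nil c g)]

@[simp] lemma length_gapsToRuns (δ : List Bool) (g : List ℕ) :
    (gapsToRuns δ g).length = g.length := by
  conv_rhs => rw [← runsToGaps_gapsToRuns δ g]
  rw [length_runsToGaps]

def descents : List ℕ → List Bool
  | x :: y :: b => decide (y ≤ x) :: descents (y :: b)
  | _ => []

@[simp] lemma descents_singleton (x : ℕ) : descents [x] = [] := rfl

@[simp] lemma descents_cons_cons (x y : ℕ) (b : List ℕ) :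
    descents (x :: y :: b) = decide (y ≤ x) :: descents (y :: b) := rfl

lemma sum_liftWord_toWord (hN : 0 < N) {bs : List (ℕ × ℕ)} (hbs : ∀ p ∈ bs, 0 < p.1 ∧ p.1 < N) :
    (liftWord N 0 (toWord bs)).sum = (liftWord N 0 (bs.map Prod.fst)).sum +
      N * weightedSum (runsToGaps (descents (bs.map Prod.fst)) (bs.map Prod.snd)) := by
  induction bs with
  | nil => rfl
  | cons p bs ih =>
    obtain ⟨b, k⟩ := p
    obtain ⟨⟨hb : 0 < b, hbN : b < N⟩, hbs⟩ := forall_mem_cons.1 hbs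
    rcases bs with _ | ⟨⟨b', k'⟩, bs⟩
    · rcases k with _ | k
      · simp [nextPart_zero_left, weightedSum]
      · have h := liftWord_replicate_zero_append hb hbN k []
        rw [append_nil] at h
        simp [h, weightedSum, nextPart_zero_left]
        ring
    · have hb' : 0 < b' := (hbs _ mem_cons_self).1
      have hword : liftWord N b (replicate k 0 ++ toWord ((b', k') :: bs)) =
          replicate k N ++ (liftWord N 0 (toWord ((b', k') :: bs))).map
            (· + N * if 0 < k ∨ b' ≤ b then 1 else 0) :=
        liftWord_replicate_zero_append_cons hN hb hbN hb' k _
      have hres : liftWord N b (b' :: bs.map Prod.fst) =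
          (liftWord N 0 (b' :: bs.map Prod.fst)).map (· + N * if b' ≤ b then 1 else 0) := by
        simpa using liftWord_replicate_zero_append_cons hN hb hbN hb' 0 (bs.map Prod.fst)
      rw [toWord_cons]
      dsimp only
      simp only [liftWord_cons (x := 0), nextPart_zero_left, hword, map_cons, hres, sum_cons,
        List.sum_append, sum_replicate, sum_map_add_const, length_liftWord, ih hbs,
        descents_cons_cons, runsToGaps_cons_cons, weightedSum_pushRun, sum_runsToGaps,
        length_runsToGaps, length_toWord, length_cons, length_map, smul_eq_mul,
        decide_eq_true_eq, decide_eq_false_iff_not]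
      rcases Nat.eq_zero_or_pos k with rfl | hk <;> split_ifs <;> first | (exfalso; omega) | ring

def runsToGapsBlocks (bs : List (ℕ × ℕ)) : List (ℕ × ℕ) :=
  (bs.map Prod.fst).zip (runsToGaps (descents (bs.map Prod.fst)) (bs.map Prod.snd))

def gapsToRunsBlocks (bs : List (ℕ × ℕ)) : List (ℕ × ℕ) :=
  (bs.map Prod.fst).zip (gapsToRuns (descents (bs.map Prod.fst)) (bs.map Prod.snd))

@[simp] lemma map_fst_runsToGapsBlocks (bs : List (ℕ × ℕ)) :
    (runsToGapsBlocks bs).map Prod.fst = bs.map Prod.fst :=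
  map_fst_zip (by simp)

@[simp] lemma map_fst_gapsToRunsBlocks (bs : List (ℕ × ℕ)) :
    (gapsToRunsBlocks bs).map Prod.fst = bs.map Prod.fst :=
  map_fst_zip (by simp)

lemma gapsToRunsBlocks_runsToGapsBlocks (bs : List (ℕ × ℕ)) :
    gapsToRunsBlocks (runsToGapsBlocks bs) = bs := by
  rw [gapsToRunsBlocks, map_fst_runsToGapsBlocks, runsToGapsBlocks, map_snd_zip (by simp),
    gapsToRuns_runsToGaps]
  exact (zip_of_prod rfl rfl).symm

lemma runsToGapsBlocks_gapsToRunsBlocks (bs : List (ℕ × ℕ)) :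
    runsToGapsBlocks (gapsToRunsBlocks bs) = bs := by
  rw [runsToGapsBlocks, map_fst_gapsToRunsBlocks, gapsToRunsBlocks, map_snd_zip (by simp),
    runsToGaps_gapsToRuns]
  exact (zip_of_prod rfl rfl).symm

/-! ### Distinct parts -/

/-- The block `(a, g)` stands for the `(g + 1)`-st number above the previous part that is
congruent to `a`. -/
def liftGaps (N : ℕ) : ℕ → List (ℕ × ℕ) → List ℕ
  | _, [] => []
  | x, p :: bs => (nextPart N x p.1 + N * p.2) :: liftGaps N (nextPart N x p.1 + N * p.2) bs

def gapsOf (N : ℕ) : ℕ → List ℕ → List (ℕ × ℕ)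
  | _, [] => []
  | x, y :: μ => (y % N, (y - nextPart N x (y % N)) / N) :: gapsOf N y μ

@[simp] lemma liftGaps_nil (x : ℕ) : liftGaps N x [] = [] := rfl

@[simp] lemma liftGaps_cons (x : ℕ) (p : ℕ × ℕ) (bs : List (ℕ × ℕ)) :
    liftGaps N x (p :: bs) =
      (nextPart N x p.1 + N * p.2) :: liftGaps N (nextPart N x p.1 + N * p.2) bs := rfl

@[simp] lemma length_liftGaps (x : ℕ) (bs : List (ℕ × ℕ)) :
    (liftGaps N x bs).length = bs.length := by
  induction bs generalizing x <;> simp [*]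

lemma liftGaps_add_mul (hN : 0 < N) (x c : ℕ) (bs : List (ℕ × ℕ)) :
    liftGaps N (x + N * c) bs = (liftGaps N x bs).map (· + N * c) := by
  induction bs generalizing x with
  | nil => rfl
  | cons p bs ih => simp [nextPart_add_mul hN, add_right_comm _ (N * c), ih]

lemma sum_liftGaps (hN : 0 < N) (x : ℕ) (bs : List (ℕ × ℕ)) :
    (liftGaps N x bs).sum =
      (liftWord N x (bs.map Prod.fst)).sum + N * weightedSum (bs.map Prod.snd) := by
  induction bs generalizing x with
  | nil => rfl
  | cons p bs ih =>
    simp only [liftGaps_cons, liftGaps_add_mul hN, sum_cons, sum_map_add_const, ih, map_cons,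
      liftWord_cons, weightedSum, length_liftGaps, length_map, smul_eq_mul]
    ring

lemma map_mod_liftGaps {x : ℕ} {bs : List (ℕ × ℕ)} (hbs : ∀ p ∈ bs, p.1 < N) :
    (liftGaps N x bs).map (· % N) = bs.map Prod.fst := by
  induction bs generalizing x with
  | nil => rfl
  | cons p bs ih =>
    rw [forall_mem_cons] at hbs
    simp [Nat.add_mul_mod_self_left, nextPart_mod hbs.1, ih hbs.2]

lemma map_fst_gapsOf (x : ℕ) (μ : List ℕ) : (gapsOf N x μ).map Prod.fst = μ.map (· % N) := by
  induction μ generalizing x with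
  | nil => rfl
  | cons y μ ih => simp [gapsOf, ih]

lemma isChain_lt_liftGaps {x : ℕ} {bs : List (ℕ × ℕ)} (hbs : ∀ p ∈ bs, 0 < p.1 ∧ p.1 < N) :
    IsChain (· < ·) (x :: liftGaps N x bs) := by
  induction bs generalizing x with
  | nil => exact isChain_singleton x
  | cons p bs ih =>
    rw [forall_mem_cons] at hbs
    exact (ih hbs.2).cons_cons ((lt_nextPart hbs.1.1 hbs.1.2).trans_le (Nat.le_add_right _ _))

lemma gapsOf_liftGaps {x : ℕ} {bs : List (ℕ × ℕ)} (hbs : ∀ p ∈ bs, p.1 < N) :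
    gapsOf N x (liftGaps N x bs) = bs := by
  induction bs generalizing x with
  | nil => rfl
  | cons p bs ih =>
    rw [forall_mem_cons] at hbs
    have hN : 0 < N := by omega
    simp [gapsOf, Nat.add_mul_mod_self_left, nextPart_mod hbs.1, Nat.mul_div_cancel_left _ hN,
      ih hbs.2]

lemma liftGaps_gapsOf (hN : 0 < N) {x : ℕ} {μ : List ℕ} (h : IsChain (· < ·) (x :: μ))
    (hμ : ∀ y ∈ μ, 0 < y % N) : liftGaps N x (gapsOf N x μ) = μ := by
  induction μ generalizing x with
  | nil => rfl
  | cons y μ ih =>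
    rw [forall_mem_cons] at hμ
    rw [isChain_cons_cons] at h
    simp [gapsOf, nextPart_add_mul_div hN hμ.1 h.1, ih h.2 hμ.2]

lemma sum_liftGaps_runsToGapsBlocks (hN : 0 < N) {bs : List (ℕ × ℕ)}
    (hbs : ∀ p ∈ bs, 0 < p.1 ∧ p.1 < N) :
    (liftGaps N 0 (runsToGapsBlocks bs)).sum = (liftWord N 0 (toWord bs)).sum := by
  rw [sum_liftGaps hN, sum_liftWord_toWord hN hbs, map_fst_runsToGapsBlocks, runsToGapsBlocks,
    map_snd_zip (by simp)]

section Bijections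

variable (N) (A : Finset ℕ) (n : ℕ)

def admissibleLists : Set (List ℕ) :=
  {ℓ | IsChain (Admissible N) (0 :: ℓ) ∧ 0 ∉ ℓ ∧ (∀ i ∈ ℓ, i % N = 0 ∨ i % N ∈ A) ∧ ℓ.sum = n}

def residueWords : Set (List ℕ) :=
  {w | w.head? ≠ some 0 ∧ (∀ s ∈ w, s = 0 ∨ s ∈ A) ∧ (liftWord N 0 w).sum = n}

def runBlocks : Set (List (ℕ × ℕ)) :=
  {bs | (∀ a ∈ bs.map Prod.fst, a ∈ A) ∧ (liftWord N 0 (toWord bs)).sum = n}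

def gapBlocks : Set (List (ℕ × ℕ)) :=
  {bs | (∀ a ∈ bs.map Prod.fst, a ∈ A) ∧ (liftGaps N 0 bs).sum = n}

def distinctLists : Set (List ℕ) :=
  {μ | IsChain (· < ·) (0 :: μ) ∧ (∀ i ∈ μ, i % N ∈ A) ∧ μ.sum = n}

variable {N A n}

lemma pos_lt_of_mem_of_subset (hA : A ⊆ Finset.Ico 1 N) {s : ℕ} (hs : s ∈ A) : 0 < s ∧ s < N := by
  have := Finset.mem_Ico.1 (hA hs)
  omega

lemma bijOn_map_mod (hN : 0 < N) (hA : A ⊆ Finset.Ico 1 N) :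
    Set.BijOn (·.map (· % N)) (admissibleLists N A n) (residueWords N A n) := by
  have hAN : ∀ {s}, s = 0 ∨ s ∈ A → s < N := fun h =>
    h.elim (· ▸ hN) fun h => (pos_lt_of_mem_of_subset hA h).2
  refine Set.InvOn.bijOn (f' := liftWord N 0) ⟨fun ℓ hℓ => liftWord_map_mod hN hℓ.1,
    fun w hw => map_mod_liftWord fun s hs => hAN (hw.2.1 s hs)⟩ ?_ ?_
  · rintro ℓ ⟨hch, h0, hres, hsum⟩
    refine ⟨?_, by simpa using hres, by rwa [liftWord_map_mod hN hch]⟩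
    rcases ℓ with _ | ⟨x, ℓ⟩
    · simp
    · have hx : x < N := by
        simpa using (isChain_cons_cons.1 hch).1.2.2.1 (Or.inr (dvd_zero N))
      simpa [Nat.mod_eq_of_lt hx] using ne_of_mem_of_not_mem mem_cons_self h0
  · rintro w ⟨hhead, hw, hsum⟩
    have hwN : ∀ s ∈ w, s < N := fun s hs => hAN (hw s hs)
    refine ⟨isChain_liftWord hwN, zero_notMem_liftWord hhead hwN, ?_, hsum⟩
    rw [← forall_mem_map (f := (· % N)) (P := fun s => s = 0 ∨ s ∈ A), map_mod_liftWord hwN]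
    exact hw

lemma bijOn_parseWord (hA : A ⊆ Finset.Ico 1 N) :
    Set.BijOn (fun w => (parseWord w).1) (residueWords N A n) (runBlocks N A n) := by
  have hA0 : ∀ {bs : List (ℕ × ℕ)}, (∀ a ∈ bs.map Prod.fst, a ∈ A) → ∀ a ∈ bs.map Prod.fst, a ≠ 0 :=
    fun h a ha => (pos_lt_of_mem_of_subset hA (h a ha)).1.ne'
  refine Set.InvOn.bijOn (f' := toWord)
    ⟨fun w hw => toWord_parseWord hw.1, fun bs hbs => by simp [parseWord_toWord (hA0 hbs.1)]⟩ ?_ ?_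
  · rintro w ⟨hhead, hw, hsum⟩
    refine ⟨fun a ha => ?_, by rwa [toWord_parseWord hhead]⟩
    rw [map_fst_parseWord, mem_filter, decide_eq_true_iff] at ha
    exact (hw a ha.1).resolve_left ha.2
  · rintro bs ⟨hbs, hsum⟩
    refine ⟨head?_toWord_ne_zero (hA0 hbs), fun s hs => ?_, hsum⟩
    exact (mem_toWord hs).imp_right (hbs s)

lemma bijOn_runsToGapsBlocks (hN : 0 < N) (hA : A ⊆ Finset.Ico 1 N) :
    Set.BijOn runsToGapsBlocks (runBlocks N A n) (gapBlocks N A n) := by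
  have hAN : ∀ {bs : List (ℕ × ℕ)}, (∀ a ∈ bs.map Prod.fst, a ∈ A) → ∀ p ∈ bs, 0 < p.1 ∧ p.1 < N :=
    fun h p hp => pos_lt_of_mem_of_subset hA (h p.1 (mem_map_of_mem hp))
  refine Set.InvOn.bijOn (f' := gapsToRunsBlocks)
    ⟨fun bs _ => gapsToRunsBlocks_runsToGapsBlocks bs,
      fun bs _ => runsToGapsBlocks_gapsToRunsBlocks bs⟩ ?_ ?_
  · rintro bs ⟨hbs, hsum⟩
    refine ⟨by rwa [map_fst_runsToGapsBlocks], ?_⟩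
    rwa [sum_liftGaps_runsToGapsBlocks hN (hAN hbs)]
  · rintro bs ⟨hbs, hsum⟩
    rw [← map_fst_gapsToRunsBlocks] at hbs
    refine ⟨hbs, ?_⟩
    rwa [← sum_liftGaps_runsToGapsBlocks hN (hAN hbs), runsToGapsBlocks_gapsToRunsBlocks]

lemma bijOn_liftGaps (hN : 0 < N) (hA : A ⊆ Finset.Ico 1 N) :
    Set.BijOn (liftGaps N 0) (gapBlocks N A n) (distinctLists N A n) := by
  have hAN : ∀ {s}, s ∈ A → 0 < s ∧ s < N := pos_lt_of_mem_of_subset hA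
  refine Set.InvOn.bijOn (f' := gapsOf N 0)
    ⟨fun bs hbs => gapsOf_liftGaps fun p hp => (hAN (hbs.1 p.1 (mem_map_of_mem hp))).2,
      fun μ hμ => liftGaps_gapsOf hN hμ.1 fun y hy => (hAN (hμ.2.1 y hy)).1⟩ ?_ ?_
  · rintro bs ⟨hbs, hsum⟩
    have hbsN : ∀ p ∈ bs, 0 < p.1 ∧ p.1 < N := fun p hp => hAN (hbs p.1 (mem_map_of_mem hp))
    refine ⟨isChain_lt_liftGaps hbsN, ?_, hsum⟩
    rwa [← forall_mem_map (f := (· % N)) (P := (· ∈ A)), map_mod_liftGaps fun p hp => (hbsN p hp).2]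
  · rintro μ ⟨hch, hμ, hsum⟩
    refine ⟨by simpa [map_fst_gapsOf] using hμ, ?_⟩
    rwa [liftGaps_gapsOf hN hch fun y hy => (hAN (hμ y hy)).1]

lemma ncard_admissibleLists_eq_ncard_distinctLists (hN : 0 < N) (hA : A ⊆ Finset.Ico 1 N) :
    (admissibleLists N A n).ncard = (distinctLists N A n).ncard :=
  ((bijOn_liftGaps hN hA).comp <| (bijOn_runsToGapsBlocks hN hA).comp <|
    (bijOn_parseWord hA).comp (bijOn_map_mod hN hA)).ncard_eq

end Bijections

/-! ### Partitions as sorted lists -/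

lemma card_subtype_partition_eq_ncard {n : ℕ} {S : Set (List ℕ)}
    (hS : S ⊆ {ℓ | ℓ.Pairwise (· ≤ ·) ∧ 0 ∉ ℓ ∧ ℓ.sum = n}) {P : n.Partition → Prop}
    (hP : ∀ p, P p ↔ p.parts.sort (· ≤ ·) ∈ S) : Nat.card {p // P p} = S.ncard := by
  refine Set.BijOn.ncard_eq (f := fun p : n.Partition => p.parts.sort (· ≤ ·))
    ⟨fun p hp => (hP p).1 hp, fun p _ q _ h => ?_, fun ℓ hℓ => ?_⟩
  · ext1
    have h : p.parts.sort (· ≤ ·) = q.parts.sort (· ≤ ·) := h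
    rw [← Multiset.sort_eq p.parts (· ≤ ·), h, Multiset.sort_eq]
  · obtain ⟨hsort, h0, hsum⟩ := hS hℓ
    refine ⟨⟨ℓ, fun hi => Nat.pos_of_ne_zero (ne_of_mem_of_not_mem hi h0), by simpa⟩, ?_, ?_⟩
    · exact (hP _).2 (by simpa only [Multiset.sort_coe_of_pairwise hsort] using hℓ)
    · exact Multiset.sort_coe_of_pairwise hsort

lemma admissibleLists_subset (N : ℕ) (A : Finset ℕ) (n : ℕ) :
    admissibleLists N A n ⊆ {ℓ | ℓ.Pairwise (· ≤ ·) ∧ 0 ∉ ℓ ∧ ℓ.sum = n} := fun _ h =>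
  ⟨isChain_iff_pairwise.1 (h.1.tail.imp fun _ _ hxy => hxy.1), h.2.1, h.2.2.2⟩

lemma distinctLists_subset (N : ℕ) (A : Finset ℕ) (n : ℕ) :
    distinctLists N A n ⊆ {ℓ | ℓ.Pairwise (· ≤ ·) ∧ 0 ∉ ℓ ∧ ℓ.sum = n} := fun μ h => by
  have h' := isChain_iff_pairwise.1 h.1
  rw [pairwise_cons] at h'
  exact ⟨h'.2.imp le_of_lt, fun h0 => lt_irrefl 0 (h'.1 0 h0), h.2.2⟩

lemma isChain_admissible_zero_cons_iff (hN : 0 < N) {ℓ : List ℕ} (hℓ : ℓ.Pairwise (· ≤ ·)) :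
    IsChain (Admissible N) (0 :: ℓ) ↔
      IsChain (fun x y => y ≤ x + N ∧ ((N ∣ y ∨ N ∣ x) → y < x + N)) ℓ ∧
        IsChain (fun x y => x = y → N ∣ x) ℓ ∧ ℓ.headD 0 < N := by
  have hhead : (∀ y ∈ ℓ.head?, Admissible N 0 y) ↔ ℓ.headD 0 < N := by
    cases ℓ <;> simp [Admissible]
    all_goals omega
  rw [isChain_cons, hhead, and_comm, ← and_assoc, ← isChain_and_iff]
  refine and_congr_left' ⟨fun h => h.imp fun x y h => ⟨⟨h.2.1, h.2.2.1⟩, h.2.2.2⟩, fun h => ?_⟩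
  exact (isChain_and_iff.2 ⟨hℓ.isChain, h⟩).imp fun x y h => ⟨h.1, h.2.1.1, h.2.1.2, h.2.2⟩

lemma sort_parts_mem_admissibleLists_iff (hN : 0 < N) (A : Finset ℕ) {n : ℕ} (p : n.Partition) :
    p.parts.sort (· ≤ ·) ∈ admissibleLists N A n ↔
      (∀ i ∈ p.parts, i % N = 0 ∨ i % N ∈ A) ∧
      (∀ i, 1 < p.parts.count i → N ∣ i) ∧
      (∀ j, j + 1 < (sortedParts p).length →
        (sortedParts p).getD j 0 ≤ (sortedParts p).getD (j + 1) 0 + N ∧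
        ((N ∣ (sortedParts p).getD j 0 ∨ N ∣ (sortedParts p).getD (j + 1) 0) →
          (sortedParts p).getD j 0 < (sortedParts p).getD (j + 1) 0 + N)) ∧
      (sortedParts p).getD ((sortedParts p).length - 1) 0 < N := by
  have hsort := Multiset.pairwise_sort p.parts (· ≤ ·)
  have hcount : ∀ i, p.parts.count i = (p.parts.sort (· ≤ ·)).count i := fun i => by
    conv_lhs => rw [← Multiset.sort_eq p.parts (· ≤ ·)]
    rw [Multiset.coe_count]
  have hgap : IsChain (fun x y => y ≤ x + N ∧ ((N ∣ y ∨ N ∣ x) → y < x + N))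
      (p.parts.sort (· ≤ ·)) ↔ ∀ j, j + 1 < (sortedParts p).length →
        (sortedParts p).getD j 0 ≤ (sortedParts p).getD (j + 1) 0 + N ∧
        ((N ∣ (sortedParts p).getD j 0 ∨ N ∣ (sortedParts p).getD (j + 1) 0) →
          (sortedParts p).getD j 0 < (sortedParts p).getD (j + 1) 0 + N) := by
    rw [sortedParts, ← isChain_reverse]
    exact (isChain_iff_getD _ 0).symm
  have h0 : 0 ∉ p.parts := fun h => (p.parts_pos h).ne' rfl
  have hsum : (p.parts.sort (· ≤ ·)).sum = n := by
    rw [← Multiset.sum_coe, Multiset.sort_eq, p.parts_sum]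
  simp only [admissibleLists, Set.mem_ofPred_eq, isChain_admissible_zero_cons_iff hN hsort, hgap,
    sortedParts, getD_reverse_length_sub_one, hcount, forall_one_lt_count_iff_isChain hsort,
    Multiset.mem_sort, h0, not_false_eq_true, hsum, and_true, true_and]
  tauto

lemma sort_parts_mem_distinctLists_iff (N : ℕ) (A : Finset ℕ) {n : ℕ} (p : n.Partition) :
    p.parts.sort (· ≤ ·) ∈ distinctLists N A n ↔ p.parts.Nodup ∧ ∀ i ∈ p.parts, i % N ∈ A := by
  have hsort := Multiset.pairwise_sort p.parts (· ≤ ·)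
  have hnodup : p.parts.Nodup ↔ (p.parts.sort (· ≤ ·)).Nodup := by
    conv_lhs => rw [← Multiset.sort_eq p.parts (· ≤ ·)]
    exact Multiset.coe_nodup
  have hsum : (p.parts.sort (· ≤ ·)).sum = n := by
    rw [← Multiset.sum_coe, Multiset.sort_eq, p.parts_sum]
  have hpos : ∀ y ∈ (p.parts.sort (· ≤ ·)).head?, 0 < y := fun y hy =>
    p.parts_pos ((Multiset.mem_sort _).1 (mem_of_mem_head? hy))
  simp only [distinctLists, Set.mem_ofPred_eq, isChain_cons, eq_true hpos, true_and,
    ← sortedLT_iff_isChain, sortedLT_iff_nodup_and_sortedLE, hsort.sortedLE, and_true, hnodup,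
    Multiset.mem_sort, hsum]

end AndrewsOlsson

theorem andrews_olsson (N : ℕ) (hN : 0 < N) (A : Finset ℕ)
    (hA : A ⊆ Finset.Ico 1 N) (n : ℕ) :
    Nat.card {p : n.Partition //
      (∀ i ∈ p.parts, i % N = 0 ∨ i % N ∈ A) ∧
      (∀ i, 1 < p.parts.count i → N ∣ i) ∧
      (∀ j, j + 1 < (sortedParts p).length →
        (sortedParts p).getD j 0 ≤ (sortedParts p).getD (j + 1) 0 + N ∧
        ((N ∣ (sortedParts p).getD j 0 ∨ N ∣ (sortedParts p).getD (j + 1) 0) →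
          (sortedParts p).getD j 0 < (sortedParts p).getD (j + 1) 0 + N)) ∧
      (sortedParts p).getD ((sortedParts p).length - 1) 0 < N} =
    Nat.card {p : n.Partition // p.parts.Nodup ∧ ∀ i ∈ p.parts, i % N ∈ A} := by
  calc _ = (AndrewsOlsson.admissibleLists N A n).ncard :=
        AndrewsOlsson.card_subtype_partition_eq_ncard (AndrewsOlsson.admissibleLists_subset N A n)
          fun p => (AndrewsOlsson.sort_parts_mem_admissibleLists_iff hN A p).symm
    _ = (AndrewsOlsson.distinctLists N A n).ncard :=
        AndrewsOlsson.ncard_admissibleLists_eq_ncard_distinctLists hN hA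
    _ = _ :=
        (AndrewsOlsson.card_subtype_partition_eq_ncard (AndrewsOlsson.distinctLists_subset N A n)
          fun p => (AndrewsOlsson.sort_parts_mem_distinctLists_iff N A p).symm).symm
end

section
/- The generating function over all partitions μ into odd parts of x^{n_o(μ)} y^{l(μ)} q^{|μ|} equals the infinite product over j ≥ 1 of (1 + x y q^{2j−1}) / (1 − y^2 q^{4j−2}). -/
open Nat

noncomputable section

/-- The coefficient field `ℚ(x, y)`. -/
abbrev K : Type := FractionRing (MvPolynomial (Fin 2) ℚ)

/-- The indeterminate `x`. -/
def x : K := algebraMap (MvPolynomial (Fin 2) ℚ) K (MvPolynomial.X 0)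

/-- The indeterminate `y`. -/
def y : K := algebraMap (MvPolynomial (Fin 2) ℚ) K (MvPolynomial.X 1)

/-! The factor for the part `i` is `∑ₘ x ^ (m % 2) * y ^ m * q ^ (i * m)`: the image under
`q ↦ q ^ i` of `(1 + x y q) / (1 - y² q²)`. Multiplying these factors over the odd `i ≤ 2d + 1`,
the `d`-th coefficient collects, for each partition of `d` into odd parts with multiplicities
`cᵢ`, the weight `∏ᵢ x ^ (cᵢ % 2) * y ^ cᵢ = x ^ n_o * y ^ l`. -/

open Finset PowerSeries

namespace PowerSeries

variable {F : Type*} [Field F]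

theorem mk_mul_one_sub_C_mul_X_sq (a b : F) :
    (mk fun m => a ^ (m % 2) * b ^ m) * (1 - C (b ^ 2) * X ^ 2) = 1 + C (a * b) * X := by
  ext n
  rw [mul_sub, mul_one, ← mul_assoc, map_sub, coeff_mul_X_pow', coeff_mul_C]
  rcases n with _ | _ | n
  · simp
  · simp [coeff_one]
  · simp [coeff_one, pow_succ, show (n + 1 + 1) % 2 = n % 2 by omega]
    ring

theorem one_add_C_mul_X_pow_mul_inv (a b : F) {i : ℕ} (hi : i ≠ 0) :
    (1 + C (a * b) * X ^ i) * (1 - C (b ^ 2) * X ^ (2 * i))⁻¹ =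
      mk fun k => if i ∣ k then a ^ (k / i % 2) * b ^ (k / i) else 0 := by
  have hunit : constantCoeff (1 - C (b ^ 2) * X ^ (2 * i) : F⟦X⟧) ≠ 0 := by simp [hi]
  have h := congrArg (expand i hi) (mk_mul_one_sub_C_mul_X_sq a b)
  rw [map_mul, map_sub, map_one, map_mul, expand_C, map_pow (expand i hi), expand_X, map_add,
    map_one, map_mul, expand_C, expand_X, ← pow_mul, mul_comm i 2] at h
  rw [← h, mul_assoc, PowerSeries.mul_inv_cancel _ hunit, mul_one]
  ext k
  rw [coeff_expand, coeff_mk, coeff_mk]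

end PowerSeries

namespace Nat.Partition

theorem exists_toFinsuppAntidiag_eq {n : ℕ} {s : Finset ℕ} (hs : 0 ∉ s) {g : ℕ →₀ ℕ}
    (hg : g ∈ s.finsuppAntidiag n) (hdvd : ∀ i ∈ s, i ∣ g i) :
    ∃ p : n.Partition, (∀ i ∈ p.parts, i ∈ s) ∧ p.toFinsuppAntidiag = g := by
  classical
  obtain ⟨hsum, hsupp⟩ := mem_finsuppAntidiag.1 hg
  have hparts : ∀ i ∈ ∑ j ∈ s, Multiset.replicate (g j / j) j, i ∈ s := by
    intro i hi
    obtain ⟨j, hj, hij⟩ := Multiset.mem_sum.1 hi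
    rwa [Multiset.eq_of_mem_replicate hij]
  refine ⟨⟨∑ j ∈ s, Multiset.replicate (g j / j) j, fun hi => ?_, ?_⟩, hparts, ?_⟩
  · exact Nat.pos_of_ne_zero fun h0 => hs (h0 ▸ hparts _ hi)
  · simp_rw [Multiset.sum_sum, Multiset.sum_replicate, smul_eq_mul, ← hsum]
    exact sum_congr rfl fun i hi => Nat.div_mul_cancel (hdvd i hi)
  · ext i
    simp only [toFinsuppAntidiag, Finsupp.coe_mk, Multiset.count_sum', Multiset.count_replicate,
      sum_ite_eq']
    split_ifs with hi
    · exact Nat.div_mul_cancel (hdvd i hi)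
    · rw [zero_mul, eq_comm, ← Finsupp.notMem_support_iff]
      exact fun h => hi (hsupp h)

theorem sum_prod_count_eq_coeff_prod {R : Type*} [CommSemiring R] (n : ℕ) {s : Finset ℕ}
    (hs : 0 ∉ s) (W : ℕ → ℕ → R) :
    ∑ p : n.Partition with ∀ i ∈ p.parts, i ∈ s, ∏ i ∈ s, W i (p.parts.count i) =
      coeff n (∏ i ∈ s, PowerSeries.mk fun k => if i ∣ k then W i (k / i) else 0) := by
  classical
  rw [coeff_prod]
  simp_rw [coeff_mk, prod_ite_zero, ← sum_filter]
  refine sum_of_injOn toFinsuppAntidiag (toFinsuppAntidiag_injective n).injOn ?_ ?_ ?_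
  · intro p hp
    simp only [coe_filter, mem_univ, true_and, Set.mem_ofPred_eq] at hp
    simp only [coe_filter, mem_finsuppAntidiag, Set.mem_ofPred_eq]
    refine ⟨⟨?_, ?_⟩, fun i _ => dvd_mul_left i _⟩
    · conv_rhs => rw [← p.parts_sum]
      exact (sum_multiset_count_of_subset _ s fun i hi => hp i (Multiset.mem_toFinset.1 hi)).symm
    · intro i hi
      exact hp i (Multiset.mem_toFinset.1 hi)
  · intro g hg hg'
    obtain ⟨p, hp, rfl⟩ := exists_toFinsuppAntidiag_eq hs (mem_filter.1 hg).1 (mem_filter.1 hg).2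
    exact absurd ⟨p, by simpa using hp, rfl⟩ hg'
  · refine fun p _ => prod_congr rfl fun i hi => ?_
    rw [toFinsuppAntidiag, Finsupp.coe_mk,
      Nat.mul_div_cancel _ (Nat.pos_of_ne_zero fun h => hs (h ▸ hi))]

end Nat.Partition

theorem Multiset.prod_pow_count_mod_two_mul_pow_count {ι M : Type*} [DecidableEq ι] [CommMonoid M]
    (a b : M) {s : Finset ι} {m : Multiset ι} (hm : ∀ i ∈ m, i ∈ s) :
    ∏ i ∈ s, a ^ (m.count i % 2) * b ^ m.count i =
      a ^ #{i ∈ m.toFinset | m.count i % 2 = 1} * b ^ Multiset.card m := by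
  have hmod : ∀ i ∈ s, m.count i % 2 = if m.count i % 2 = 1 then 1 else 0 := by
    intro i _
    split_ifs <;> omega
  have hfilter : {i ∈ s | m.count i % 2 = 1} = {i ∈ m.toFinset | m.count i % 2 = 1} := by
    ext i
    simp only [Finset.mem_filter, Multiset.mem_toFinset]
    exact ⟨fun ⟨_, h⟩ => ⟨Multiset.count_pos.1 (by omega), h⟩, fun ⟨hi, h⟩ => ⟨hm i hi, h⟩⟩
  rw [prod_mul_distrib, prod_pow_eq_pow_sum, prod_pow_eq_pow_sum, sum_congr rfl hmod, sum_boole,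
    Nat.cast_id, hfilter, sum_count_eq_card hm]

/-- An infinite product `∏_{j ≥ 1} g j` of power series, with `g j = 1 + O(q^j)`,
read off coefficientwise: its `d`-th coefficient is that of any sufficiently long
partial product. -/
theorem odd_parts_generating_function (d : ℕ) :
    (PowerSeries.coeff (R := K) d) (PowerSeries.mk fun n => ∑ p : n.Partition,
        if ∀ i ∈ p.parts, i % 2 = 1 then x ^ no p * y ^ p.parts.card else 0) =
    (PowerSeries.coeff (R := K) d) (∏ j ∈ Finset.Icc 1 (d + 1),
        (1 + PowerSeries.C (R := K) (x * y) * PowerSeries.X ^ (2 * j - 1)) *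
          (1 - PowerSeries.C (R := K) (y ^ 2) * PowerSeries.X ^ (4 * j - 2))⁻¹) := by
  classical
  set s := (Icc 1 (d + 1)).image (2 * · - 1) with hs
  have hmem : ∀ i, i ∈ s ↔ i % 2 = 1 ∧ i ≤ 2 * d + 1 := by
    intro i
    simp only [hs, mem_image, mem_Icc]
    exact ⟨by rintro ⟨j, hj, rfl⟩; omega, fun h => ⟨(i + 1) / 2, by omega, by omega⟩⟩
  have hodd (p : d.Partition) : (∀ i ∈ p.parts, i % 2 = 1) ↔ ∀ i ∈ p.parts, i ∈ s :=
    forall₂_congr fun i hi => by have := p.le_of_mem_parts hi; rw [hmem]; omega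
  have hfactors : ∏ j ∈ Icc 1 (d + 1), (1 + C (x * y) * X ^ (2 * j - 1)) *
      (1 - C (y ^ 2) * X ^ (4 * j - 2))⁻¹ =
      ∏ i ∈ s, PowerSeries.mk fun k => if i ∣ k then x ^ (k / i % 2) * y ^ (k / i) else 0 := by
    rw [hs, prod_image fun j hj j' hj' h => by simp only [coe_Icc, Set.mem_Icc] at hj hj'; omega]
    refine prod_congr rfl fun j hj => ?_
    rw [show 4 * j - 2 = 2 * (2 * j - 1) by omega]
    exact one_add_C_mul_X_pow_mul_inv x y (by simp at hj; omega)
  rw [coeff_mk, hfactors, ← Nat.Partition.sum_prod_count_eq_coeff_prod d (by simp [hmem])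
    fun _ m => x ^ (m % 2) * y ^ m, ← sum_filter, filter_congr fun p _ => hodd p]
  exact sum_congr rfl fun p hp =>
    (Multiset.prod_pow_count_mod_two_mul_pow_count x y (mem_filter.1 hp).2).symm
end
end

section
/- The generating function over all partitions λ into distinct parts of x^{l_o(λ)} q^{|λ|} equals the generating function over all partitions μ into odd parts of x^{n_o(μ)} q^{|μ|}. -/
open Nat

/-!
Glaisher's map replaces each part `2 ^ k * a` (`a` odd) of a partition by `2 ^ k` copies of `a`.
On a partition `λ` into distinct parts, the multiplicity of `a` in the image is
`∑ k ∈ E a, 2 ^ k` with `E a = {k | 2 ^ k * a ∈ λ}` (`λ.exponents a`), so by uniqueness of binary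
expansions the map is injective; by Euler's theorem (odd and distinct partitions of `n` are
equinumerous) it is a bijection onto the partitions into odd parts. That multiplicity is odd iff
`0 ∈ E a`, i.e. iff `a` itself is a part of `λ`, whence `l_o(λ) = n_o` of the image.
-/

theorem Finset.sum_two_pow_mod_two_eq_one_iff (s : Finset ℕ) :
    (∑ k ∈ s, 2 ^ k) % 2 = 1 ↔ 0 ∈ s := by
  have hterm (k : ℕ) : 2 ^ k % 2 = if k = 0 then 1 else 0 := by
    rcases k with _ | k <;> simp [Nat.pow_succ]
  rw [Finset.sum_nat_mod]
  simp only [hterm, Finset.sum_ite_eq']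
  split_ifs with h <;> simp [h]

theorem Nat.eq_of_ordCompl_eq_of_factorization_eq {p m m' : ℕ}
    (hcompl : ordCompl[p] m = ordCompl[p] m') (hfac : m.factorization p = m'.factorization p) :
    m = m' := by
  rw [← ordProj_mul_ordCompl_eq_self m p, ← ordProj_mul_ordCompl_eq_self m' p, hcompl, hfac]

namespace Nat.Partition

open Multiset

variable {n : ℕ}

def toOdds (p : n.Partition) : n.Partition where
  parts := p.parts.bind fun m => replicate (2 ^ m.factorization 2) (ordCompl[2] m)
  parts_pos hi := by
    obtain ⟨m, hm, hi⟩ := mem_bind.mp hi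
    rw [eq_of_mem_replicate hi]
    exact ordCompl_pos 2 (p.parts_pos hm).ne'
  parts_sum := by
    simp_rw [sum_bind, sum_replicate, smul_eq_mul, ordProj_mul_ordCompl_eq_self, map_id',
      p.parts_sum]

theorem odd_of_mem_toOdds_parts {p : n.Partition} {a : ℕ} (ha : a ∈ p.toOdds.parts) :
    a % 2 = 1 := by
  obtain ⟨m, hm, ha⟩ := mem_bind.mp ha
  rw [eq_of_mem_replicate ha]
  exact two_dvd_ne_zero.mp (not_dvd_ordCompl prime_two (p.parts_pos hm).ne')

theorem toOdds_mem_odds (p : n.Partition) : p.toOdds ∈ odds n := by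
  simpa [odds, restricted, Nat.odd_iff] using fun a => odd_of_mem_toOdds_parts

def exponents (p : n.Partition) (a : ℕ) : Finset ℕ :=
  {m ∈ p.parts.toFinset | ordCompl[2] m = a}.image (·.factorization 2)

theorem factorization_mem_exponents_iff (p : n.Partition) (m : ℕ) :
    m.factorization 2 ∈ p.exponents (ordCompl[2] m) ↔ m ∈ p.parts := by
  simp only [exponents, Finset.mem_image, Finset.mem_filter, mem_toFinset]
  constructor
  · rintro ⟨m', ⟨hm', hcompl⟩, hfac⟩
    rwa [← eq_of_ordCompl_eq_of_factorization_eq hcompl hfac]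
  · exact fun hm => ⟨m, ⟨hm, rfl⟩, rfl⟩

theorem zero_mem_exponents_iff (p : n.Partition) {a : ℕ} (ha : a % 2 = 1) :
    0 ∈ p.exponents a ↔ a ∈ p.parts := by
  have hfac : a.factorization 2 = 0 := factorization_eq_zero_of_not_dvd (by omega)
  have hcompl : ordCompl[2] a = a := by simp [hfac]
  simpa [hfac, hcompl] using p.factorization_mem_exponents_iff a

theorem count_toOdds {p : n.Partition} (hp : p.parts.Nodup) (a : ℕ) :
    p.toOdds.parts.count a = ∑ k ∈ p.exponents a, 2 ^ k := by
  have hinj : Set.InjOn (fun m : ℕ => m.factorization 2)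
      (({m ∈ p.parts.toFinset | ordCompl[2] m = a} : Finset ℕ) : Set ℕ) := by
    intro m hm m' hm' hfac
    rw [Finset.coe_filter] at hm hm'
    exact eq_of_ordCompl_eq_of_factorization_eq (hm.2.trans hm'.2.symm) hfac
  rw [exponents, Finset.sum_image hinj, Finset.sum_filter]
  simp_rw [toOdds, count_bind, count_replicate]
  rw [Finset.sum_eq_multiset_sum, toFinset_val, hp.dedup]

theorem toOdds_injOn : Set.InjOn toOdds (distincts n : Set n.Partition) := by
  intro p hp q hq hpq
  simp only [Finset.mem_coe, distincts, Finset.mem_filter, Finset.mem_univ, true_and] at hp hq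
  have hexp (a : ℕ) : p.exponents a = q.exponents a :=
    Finset.geomSum_injective le_rfl <| by
      simpa [← count_toOdds hp, ← count_toOdds hq] using congrArg (Multiset.count a ·.parts) hpq
  ext1
  refine (hp.ext hq).mpr fun m => ?_
  rw [← factorization_mem_exponents_iff, hexp, factorization_mem_exponents_iff]

theorem image_toOdds_distincts : (distincts n).image toOdds = odds n := by
  refine Finset.eq_of_subset_of_card_le ?_ ?_
  · exact Finset.image_subset_iff.mpr fun p _ => toOdds_mem_odds p
  · rw [Finset.card_image_of_injOn toOdds_injOn, card_odds_eq_card_distincts]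

theorem count_toOdds_mod_two_eq_one_iff {p : n.Partition} (hp : p.parts.Nodup) {a : ℕ}
    (ha : a % 2 = 1) : p.toOdds.parts.count a % 2 = 1 ↔ a ∈ p.parts := by
  rw [count_toOdds hp, Finset.sum_two_pow_mod_two_eq_one_iff, zero_mem_exponents_iff p ha]

theorem no_toOdds {p : n.Partition} (hp : p.parts.Nodup) : no p.toOdds = lo p := by
  have hmem (a : ℕ) : a ∈ p.toOdds.parts ∧ p.toOdds.parts.count a % 2 = 1 ↔
      a ∈ p.parts ∧ a % 2 = 1 := by
    constructor
    · rintro ⟨ha, hcount⟩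
      have hodd := odd_of_mem_toOdds_parts ha
      exact ⟨(count_toOdds_mod_two_eq_one_iff hp hodd).mp hcount, hodd⟩
    · rintro ⟨ha, hodd⟩
      have hcount := (count_toOdds_mod_two_eq_one_iff hp hodd).mpr ha
      exact ⟨count_pos.mp (by omega), hcount⟩
  rw [no, lo, ← toFinset_card_of_nodup (hp.filter _), toFinset_filter]
  congr 1
  ext a
  simpa using hmem a

end Nat.Partition

/-- Glaisher's refinement as a generating function identity:
`∑_{λ distinct} x^{l_o(λ)} q^{|λ|} = ∑_{μ odd} x^{n_o(μ)} q^{|μ|}`. -/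
theorem glaisher_generating_function :
    (PowerSeries.mk fun n => ∑ p : n.Partition,
        if p.parts.Nodup then (Polynomial.X : Polynomial ℤ) ^ lo p else 0) =
    (PowerSeries.mk fun n => ∑ p : n.Partition,
        if ∀ i ∈ p.parts, i % 2 = 1 then (Polynomial.X : Polynomial ℤ) ^ no p else 0) := by
  ext1 n
  have hodds : Partition.odds n = Finset.univ.filter fun p => ∀ i ∈ p.parts, i % 2 = 1 := by
    simp [Partition.odds, Partition.restricted, Nat.odd_iff]
  rw [PowerSeries.coeff_mk, PowerSeries.coeff_mk, ← Finset.sum_filter, ← Finset.sum_filter,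
    ← hodds, ← Partition.image_toOdds_distincts,
    Finset.sum_image Partition.toOdds_injOn]
  refine Finset.sum_congr rfl fun p hp => ?_
  rw [Partition.no_toOdds (Finset.mem_filter.mp hp).2]
end
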